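/- arXiv:math/0508352 — 6 statements merged into one kernel-verified Lean document; each statement's English description precedes it below -/
import Mathlib

section
/- Let 1 < p, q < ∞ with 1/p + 1/q = 1, let r ∈ ℕ with r ≥ 2, s = r^(1/p), t = r^(1/q). Let x be a finitely supported real sequence whose nonzero coordinates are all of the form ±s^j (j ∈ ℤ), and let y be a finitely supported real sequence whose nonzero coordinates are all of the form ±t^j (j ∈ ℤ) with Σᵢ|y(i)|^q ≤ 1. Then |Σᵢ x(i)y(i)| ≤ 1 + (Σᵢ|x(i)|^p)/t. -/
/-!
Write `u = |x i|^p` and `v = |y i|^q`, so that `|x i * y i| = u^(1/p) v^(1/q)`. Both `u` and `v`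
are integer powers of `r`, hence either `u ≤ v`, and then `u^(1/p) v^(1/q) ≤ v`, or `r v ≤ u`,
and then `u^(1/p) v^(1/q) ≤ u / r^(1/q) = u / t`. In either case the product is at most
`v + u / t`; summing over `i` and using `∑ |y i|^q ≤ 1` gives the estimate.
-/

open Finset

namespace Real

variable {u v α β : ℝ}

lemma rpow_mul_rpow_le_of_le (hu : 0 ≤ u) (hv : 0 ≤ v) (hα : 0 ≤ α) (hαβ : α + β = 1)
    (huv : u ≤ v) : u ^ α * v ^ β ≤ v :=
  calc u ^ α * v ^ β ≤ v ^ α * v ^ β := by gcongr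
    _ = v := by rw [← rpow_add' hv (by simp [hαβ]), hαβ, rpow_one]

lemma rpow_mul_rpow_le_div_of_mul_le {r : ℝ} (hu : 0 ≤ u) (hv : 0 ≤ v) (hβ : 0 ≤ β)
    (hαβ : α + β = 1) (hr : 0 < r) (huv : r * v ≤ u) : u ^ α * v ^ β ≤ u / r ^ β :=
  calc u ^ α * v ^ β ≤ u ^ α * (u / r) ^ β := by
        gcongr
        rwa [le_div_iff₀' hr]
    _ = u ^ (α + β) / r ^ β := by
        rw [div_rpow hu hr.le, rpow_add' hu (by simp [hαβ])]
        ring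
    _ = u / r ^ β := by rw [hαβ, rpow_one]

lemma rpow_mul_rpow_le_add_div {r : ℝ} (hu : 0 ≤ u) (hv : 0 ≤ v) (hα : 0 ≤ α) (hβ : 0 ≤ β)
    (hαβ : α + β = 1) (hr : 0 < r) (huv : u ≤ v ∨ r * v ≤ u) :
    u ^ α * v ^ β ≤ v + u / r ^ β := by
  have hv' : 0 ≤ u / r ^ β := by positivity
  rcases huv with huv | huv
  · linarith [rpow_mul_rpow_le_of_le hu hv hα hαβ huv]
  · linarith [rpow_mul_rpow_le_div_of_mul_le hu hv hβ hαβ hr huv]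

lemma rpow_one_div_zpow_rpow {r p : ℝ} (hr : 0 ≤ r) (hp : p ≠ 0) (j : ℤ) :
    ((r ^ (1 / p)) ^ j) ^ p = r ^ j := by
  rw [← rpow_mul_intCast hr, ← rpow_mul hr, ← rpow_intCast]
  congr 1
  field_simp

end Real

open Real

lemma zpow_le_zpow_or_mul_zpow_le {r : ℝ} (hr : 1 ≤ r) (j k : ℤ) :
    r ^ j ≤ r ^ k ∨ r * r ^ k ≤ r ^ j := by
  rcases le_or_gt j k with hjk | hjk
  · exact .inl (zpow_le_zpow_right₀ hr hjk)
  · right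
    rw [mul_comm, ← zpow_add_one₀ (by positivity)]
    exact zpow_le_zpow_right₀ hr hjk

lemma abs_mul_le_of_abs_eq_zpow {p q r a b : ℝ} (hp : 0 < p) (hq : 0 < q)
    (hpq : 1 / p + 1 / q = 1) (hr : 1 ≤ r)
    (ha : a ≠ 0 → ∃ j : ℤ, |a| = (r ^ (1 / p)) ^ j)
    (hb : b ≠ 0 → ∃ k : ℤ, |b| = (r ^ (1 / q)) ^ k) :
    |a * b| ≤ |b| ^ q + |a| ^ p / r ^ (1 / q) := by
  have hrhs : 0 ≤ |b| ^ q + |a| ^ p / r ^ (1 / q) := by positivity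
  rcases eq_or_ne a 0 with rfl | ha0
  · simpa using hrhs
  rcases eq_or_ne b 0 with rfl | hb0
  · simpa using hrhs
  obtain ⟨j, hj⟩ := ha ha0
  obtain ⟨k, hk⟩ := hb hb0
  have hu : |a| ^ p = r ^ j := by rw [hj, rpow_one_div_zpow_rpow (by positivity) hp.ne']
  have hv : |b| ^ q = r ^ k := by rw [hk, rpow_one_div_zpow_rpow (by positivity) hq.ne']
  have hab : |a * b| = (|a| ^ p) ^ (1 / p) * (|b| ^ q) ^ (1 / q) := by
    rw [abs_mul, one_div, one_div, rpow_rpow_inv (abs_nonneg a) hp.ne',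
      rpow_rpow_inv (abs_nonneg b) hq.ne']
  rw [hab]
  refine rpow_mul_rpow_le_add_div (by positivity) (by positivity) (by positivity)
    (by positivity) hpq (by positivity) ?_
  rw [hu, hv]
  exact zpow_le_zpow_or_mul_zpow_le hr j k

lemma Finsupp.sum_abs_rpow_le_sum_support {ι : Type*} {q : ℝ} (hq : q ≠ 0) (s : Finset ι)
    (y : ι →₀ ℝ) : ∑ i ∈ s, |y i| ^ q ≤ ∑ i ∈ y.support, |y i| ^ q := by
  rw [← sum_filter_ne_zero]
  refine sum_le_sum_of_subset_of_nonneg (fun i hi => ?_) fun i _ _ => by positivity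
  simp only [mem_filter] at hi
  refine y.mem_support_iff.mpr fun hyi => hi.2 ?_
  rw [hyi, abs_zero, zero_rpow hq]

theorem pairing_estimate (p q : ℝ) (hp : 1 < p) (hq : 1 < q)
    (hpq : 1 / p + 1 / q = 1) (r : ℕ) (hr : 2 ≤ r)
    (s t : ℝ) (hs : s = (r : ℝ) ^ (1 / p : ℝ)) (ht : t = (r : ℝ) ^ (1 / q : ℝ))
    (x y : ℕ →₀ ℝ)
    (hxC : ∀ i, x i ≠ 0 → ∃ j : ℤ, |x i| = s ^ j)
    (hyC : ∀ i, y i ≠ 0 → ∃ j : ℤ, |y i| = t ^ j)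
    (hynorm : ∑ i ∈ y.support, |y i| ^ q ≤ 1) :
    |∑ i ∈ x.support, x i * y i| ≤ 1 + (∑ i ∈ x.support, |x i| ^ p) / t := by
  subst hs ht
  have hr1 : (1 : ℝ) ≤ r := by exact_mod_cast one_le_two.trans hr
  have hy : ∑ i ∈ x.support, |y i| ^ q ≤ 1 :=
    (Finsupp.sum_abs_rpow_le_sum_support (by positivity) _ y).trans hynorm
  calc |∑ i ∈ x.support, x i * y i|
      ≤ ∑ i ∈ x.support, |x i * y i| := abs_sum_le_sum_abs _ _
    _ ≤ ∑ i ∈ x.support, (|y i| ^ q + |x i| ^ p / (r : ℝ) ^ (1 / q)) :=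
        sum_le_sum fun i _ =>
          abs_mul_le_of_abs_eq_zpow (by linarith) (by linarith) hpq hr1 (hxC i) (hyC i)
    _ = ∑ i ∈ x.support, |y i| ^ q + (∑ i ∈ x.support, |x i| ^ p) / (r : ℝ) ^ (1 / q) := by
        rw [sum_add_distrib, sum_div]
    _ ≤ 1 + (∑ i ∈ x.support, |x i| ^ p) / (r : ℝ) ^ (1 / q) := by gcongr
end

section
/- Fix 1 < q < ∞, r ∈ ℕ with r ≥ 2, and t = r^(1/q). Let K_{q,r} be the smallest subset of finitely supported real sequences containing all ±e_n and closed under the operation: if z_1 < z_2 < … < z_l are in K_{q,r} with l ≤ r (consecutive supports), then t^(-1)(z_1 + … + z_l) ∈ K_{q,r}. If m = (m(1),…,m(n)) is a finite sequence of natural numbers with Φ(m) ≤ 1 (where Φ(m) = r^(-m(1)) + 2Σ_{i=2}^{n-1} r^(-m(i)) + r^(-m(n)), with the obvious modifications for n ≤ 2), then the vector V(m) = (t^(-m(1)), …, t^(-m(n)), 0, 0, …) belongs to K_{q,r}. -/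
open scoped BigOperators

noncomputable def Phi (r : ℕ) : List ℕ → ℝ
  | [] => 0
  | [a] => (r : ℝ) ^ (-(a : ℤ))
  | a :: b :: l =>
      (r : ℝ) ^ (-(a : ℤ)) +
        2 * (((b :: l).dropLast).map (fun c => (r : ℝ) ^ (-(c : ℤ)))).sum +
        (r : ℝ) ^ (-(((b :: l).getLast (List.cons_ne_nil _ _)) : ℤ))

/-- `S` contains `±eₙ` and is closed under scaled sums of at most `r` successive blocks. -/
def TsirelsonClosed (q : ℝ) (r : ℕ) (S : Set (ℕ →₀ ℝ)) : Prop :=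
  (∀ n : ℕ, Finsupp.single n 1 ∈ S ∧ Finsupp.single n (-1) ∈ S) ∧
  ∀ (l : ℕ) (z : Fin l → ℕ →₀ ℝ), 1 ≤ l → l ≤ r → (∀ i, z i ∈ S) →
    (∀ i j : Fin l, i < j → ∀ a ∈ (z i).support, ∀ b ∈ (z j).support, a < b) →
    ((r : ℝ) ^ (-(1 / q) : ℝ)) • (∑ i, z i) ∈ S

/-- The norming set of the Tsirelson-type space `T[A_r, r^{-1/q}]`. -/
def Kqr (q : ℝ) (r : ℕ) : Set (ℕ →₀ ℝ) := ⋂₀ {S | TsirelsonClosed q r S}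

/-- `V(m) = (t^{-m(1)}, …, t^{-m(n)}, 0, …)` with `t = r^{1/q}`. -/
noncomputable def Vvec (q : ℝ) (r : ℕ) (m : List ℕ) : ℕ →₀ ℝ :=
  ∑ i ∈ Finset.range m.length,
    Finsupp.single i (((r : ℝ) ^ (1 / q : ℝ)) ^ (-(m.getD i 0 : ℤ)))

/-! Induction on `m.sum`. Unless `m = [0]`, `Φ(m) ≤ 1` forces all entries of `m` to be positive;
lowering every entry by one multiplies `Φ` by `r` and `V` by `t`, so it suffices to cut a list `m'`
with `Φ(m') ≤ r` into at most `r` consecutive blocks with `Φ ≤ 1` each. Cut greedily: `Φ` is the sum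
of `r^{-a} + r^{-b}` over adjacent pairs `a, b`, hence additive over two pieces overlapping in one
entry, and each block together with the first entry of the next one has `Φ > 1`; so `k` blocks
force `Φ(m') > k - 1`. -/

section Phi

variable {r : ℕ}

theorem Phi_pair (a b : ℕ) : Phi r [a, b] = (r : ℝ) ^ (-(a : ℤ)) + (r : ℝ) ^ (-(b : ℤ)) := by
  simp [Phi]

theorem Phi_cons_cons_of_ne_nil (a b : ℕ) {l : List ℕ} (hl : l ≠ []) :
    Phi r (a :: b :: l) = (r : ℝ) ^ (-(a : ℤ)) + (r : ℝ) ^ (-(b : ℤ)) + Phi r (b :: l) := by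
  obtain ⟨c, l, rfl⟩ := List.exists_cons_of_ne_nil hl
  simp [Phi, List.dropLast_cons_cons]
  ring

theorem Phi_append_cons {B : List ℕ} (hB : B ≠ []) (c : ℕ) {rest : List ℕ} (hrest : rest ≠ []) :
    Phi r (B ++ c :: rest) = Phi r (B ++ [c]) + Phi r (c :: rest) := by
  induction B with
  | nil => exact absurd rfl hB
  | cons a B ih =>
    rcases eq_or_ne B [] with rfl | hB'
    · rw [List.singleton_append, Phi_cons_cons_of_ne_nil a c hrest, List.singleton_append,
        Phi_pair]
    · obtain ⟨b, B, rfl⟩ := List.exists_cons_of_ne_nil hB'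
      simp only [List.cons_append]
      rw [Phi_cons_cons_of_ne_nil a b (by simp), Phi_cons_cons_of_ne_nil a b (by simp),
        ← List.cons_append, ih hB', ← List.cons_append]
      ring

theorem Phi_singleton_le_one (hr : 1 ≤ r) (a : ℕ) : Phi r [a] ≤ 1 :=
  zpow_le_one_of_nonpos₀ (by exact_mod_cast hr) (by omega)

theorem Phi_pos (hr : 0 < r) {m : List ℕ} (hm : m ≠ []) : 0 < Phi r m := by
  have hφ (a : ℕ) : (0 : ℝ) < (r : ℝ) ^ (-(a : ℤ)) := zpow_pos (by exact_mod_cast hr) _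
  induction m with
  | nil => exact absurd rfl hm
  | cons a l ih =>
    rcases eq_or_ne l [] with rfl | hl
    · exact hφ a
    obtain ⟨b, l, rfl⟩ := List.exists_cons_of_ne_nil hl
    rcases eq_or_ne l [] with rfl | hl'
    · rw [Phi_pair]; linarith [hφ a, hφ b]
    · rw [Phi_cons_cons_of_ne_nil a b hl']; linarith [hφ a, hφ b, ih hl]

theorem zpow_neg_lt_Phi_of_mem (hr : 0 < r) {m : List ℕ} (hm : 2 ≤ m.length) {a : ℕ}
    (ha : a ∈ m) : (r : ℝ) ^ (-(a : ℤ)) < Phi r m := by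
  have hφ (a : ℕ) : (0 : ℝ) < (r : ℝ) ^ (-(a : ℤ)) := zpow_pos (by exact_mod_cast hr) _
  induction m with
  | nil => simp at hm
  | cons x l ih =>
    rcases l with _ | ⟨y, l⟩
    · simp at hm
    rcases eq_or_ne l [] with rfl | hl
    · rw [Phi_pair]
      rcases List.mem_pair.1 ha with h | h <;> rw [h] <;> linarith [hφ x, hφ y]
    rw [Phi_cons_cons_of_ne_nil x y hl]
    rcases List.mem_cons.1 ha with rfl | ha
    · linarith [hφ y, Phi_pos hr (List.cons_ne_nil y l)]
    · have := ih (by simp; exact List.length_pos_of_ne_nil hl) ha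
      linarith [hφ x, hφ y]

theorem pos_of_mem_of_Phi_le_one (hr : 0 < r) {m : List ℕ} (hm : m ≠ [0]) (hΦ : Phi r m ≤ 1)
    {a : ℕ} (ha : a ∈ m) : 0 < a := by
  by_contra h0
  obtain rfl : a = 0 := by omega
  rcases m with _ | ⟨b, _ | ⟨c, l⟩⟩
  · simp at ha
  · simp_all
  · have := zpow_neg_lt_Phi_of_mem hr (by simp) ha
    simp at this
    linarith

end Phi

section Blocks

variable {r : ℕ}

theorem zpow_neg_pred (hr : r ≠ 0) {a : ℕ} (ha : 0 < a) :
    (r : ℝ) ^ (-((a - 1 : ℕ) : ℤ)) = r * (r : ℝ) ^ (-(a : ℤ)) := by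
  rw [show -((a - 1 : ℕ) : ℤ) = 1 + -(a : ℤ) by omega, zpow_add₀ (by exact_mod_cast hr), zpow_one]

theorem Phi_map_pred (hr : r ≠ 0) {m : List ℕ} (hm : ∀ a ∈ m, 0 < a) :
    Phi r (m.map (· - 1)) = r * Phi r m := by
  induction m with
  | nil => simp [Phi]
  | cons a l ih =>
    rcases l with _ | ⟨b, l⟩
    · exact zpow_neg_pred hr (hm a (by simp))
    rcases eq_or_ne l [] with rfl | hl
    · simp only [List.map_cons, List.map_nil, Phi_pair,
        zpow_neg_pred hr (hm a (by simp)), zpow_neg_pred hr (hm b (by simp))]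
      ring
    · simp only [List.map_cons] at ih ⊢
      rw [Phi_cons_cons_of_ne_nil _ _ (by simpa using hl), Phi_cons_cons_of_ne_nil _ _ hl,
        ih (fun x hx => hm x (List.mem_cons_of_mem a hx)),
        zpow_neg_pred hr (hm a (by simp)), zpow_neg_pred hr (hm b (by simp))]
      ring

theorem exists_maximal_prefix (hr : 1 ≤ r) {m : List ℕ} (hm : 1 < Phi r m) :
    ∃ B c rest, m = B ++ c :: rest ∧ B ≠ [] ∧ Phi r B ≤ 1 ∧ 1 < Phi r (B ++ [c]) := by
  induction m using List.reverseRecOn with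
  | nil => norm_num [Phi] at hm
  | append_singleton B c ih =>
    by_cases hB : Phi r B ≤ 1
    · refine ⟨B, c, [], rfl, ?_, hB, hm⟩
      rintro rfl
      exact absurd (Phi_singleton_le_one hr c) hm.not_ge
    · obtain ⟨B', c', rest, rfl, hB', hΦB', hΦB'c'⟩ := ih (not_le.1 hB)
      exact ⟨B', c', rest ++ [c], by simp, hB', hΦB', hΦB'c'⟩

theorem exists_blocks (hr : 1 ≤ r) {m : List ℕ} (hm : m ≠ []) :
    ∃ L : List (List ℕ), L.flatten = m ∧ L ≠ [] ∧ (∀ B ∈ L, B ≠ [] ∧ Phi r B ≤ 1) ∧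
      (L.length : ℝ) - 1 < Phi r m := by
  induction hlen : m.length using Nat.strong_induction_on generalizing m with
  | _ n ih =>
  by_cases hΦ : Phi r m ≤ 1
  · refine ⟨[m], by simp, by simp, by simpa using ⟨hm, hΦ⟩, ?_⟩
    simpa using Phi_pos hr hm
  obtain ⟨B, c, rest, rfl, hB, hΦB, hΦBc⟩ := exists_maximal_prefix hr (not_le.1 hΦ)
  rcases eq_or_ne rest [] with rfl | hrest
  · refine ⟨[B, [c]], by simp, by simp, ?_, by norm_num; linarith⟩
    simpa using ⟨⟨hB, hΦB⟩, Phi_singleton_le_one hr c⟩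
  obtain ⟨L, hL, hLne, hLblocks, hLlen⟩ :=
    ih _ (by subst hlen; simp [List.length_pos_of_ne_nil hB]) (List.cons_ne_nil c rest) rfl
  refine ⟨B :: L, by simp [hL], by simp, ?_, ?_⟩
  · simpa using ⟨⟨hB, hΦB⟩, hLblocks⟩
  · rw [Phi_append_cons hB c hrest, List.length_cons]
    push_cast
    linarith

theorem exists_blocks_length_le (hr : 1 ≤ r) {m : List ℕ} (hm : m ≠ []) (hΦ : Phi r m ≤ r) :
    ∃ L : List (List ℕ), L.flatten = m ∧ L ≠ [] ∧ (∀ B ∈ L, B ≠ [] ∧ Phi r B ≤ 1) ∧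
      L.length ≤ r := by
  obtain ⟨L, hL, hLne, hLblocks, hLlen⟩ := exists_blocks hr hm
  refine ⟨L, hL, hLne, hLblocks, ?_⟩
  have : (L.length : ℝ) < (r + 1 : ℕ) := by push_cast; linarith
  exact Nat.lt_succ_iff.1 (by exact_mod_cast this)

end Blocks

/-- `V(m)` moved to start at coordinate `k`. -/
noncomputable def VvecFrom (q : ℝ) (r k : ℕ) : List ℕ → ℕ →₀ ℝ
  | [] => 0
  | a :: m => Finsupp.single k (((r : ℝ) ^ (1 / q : ℝ)) ^ (-(a : ℤ))) + VvecFrom q r (k + 1) m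

/-- The paper's `x < y` for finitely supported vectors. -/
def SupportLT {M : Type*} [Zero M] (x y : ℕ →₀ M) : Prop :=
  ∀ a ∈ x.support, ∀ b ∈ y.support, a < b

/-- The vectors `V(B)` of the blocks `B` of `L`, laid out consecutively from coordinate `k`. -/
noncomputable def blockVecs (q : ℝ) (r k : ℕ) : List (List ℕ) → List (ℕ →₀ ℝ)
  | [] => []
  | B :: L => VvecFrom q r k B :: blockVecs q r (k + B.length) L

section Vectors

variable {q : ℝ} {r : ℕ}

theorem VvecFrom_eq_sum (k : ℕ) (m : List ℕ) :
    VvecFrom q r k m = ∑ i ∈ Finset.range m.length,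
      Finsupp.single (k + i) (((r : ℝ) ^ (1 / q : ℝ)) ^ (-(m.getD i 0 : ℤ))) := by
  induction m generalizing k with
  | nil => rfl
  | cons a m ih =>
    rw [VvecFrom, ih, List.length_cons, Finset.sum_range_succ', add_comm]
    simp only [List.getD_cons_succ, List.getD_cons_zero, add_zero, Nat.add_right_comm k, add_assoc]

theorem Vvec_eq_VvecFrom_zero (m : List ℕ) : Vvec q r m = VvecFrom q r 0 m := by
  simp only [Vvec, VvecFrom_eq_sum, zero_add]

theorem VvecFrom_append (k : ℕ) (B C : List ℕ) :
    VvecFrom q r k (B ++ C) = VvecFrom q r k B + VvecFrom q r (k + B.length) C := by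
  induction B generalizing k with
  | nil => simp [VvecFrom]
  | cons a B ih =>
    simp only [List.cons_append, VvecFrom, ih, List.length_cons, add_assoc, Nat.add_right_comm k]

theorem support_VvecFrom_subset (k : ℕ) (m : List ℕ) :
    (VvecFrom q r k m).support ⊆ Finset.Ico k (k + m.length) := by
  induction m generalizing k with
  | nil => simp [VvecFrom]
  | cons a m ih =>
    classical
    refine Finsupp.support_add.trans (Finset.union_subset ?_ ((ih (k + 1)).trans ?_))
    · exact Finsupp.support_single_subset.trans (by simp)
    · intro x; simp only [Finset.mem_Ico, List.length_cons]; omega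

theorem VvecFrom_eq_smul_map_pred (hr : 0 < r) (k : ℕ) {m : List ℕ} (hm : ∀ a ∈ m, 0 < a) :
    VvecFrom q r k m = ((r : ℝ) ^ (-(1 / q) : ℝ)) • VvecFrom q r k (m.map (· - 1)) := by
  have ht : (0 : ℝ) < (r : ℝ) ^ (1 / q : ℝ) := Real.rpow_pos_of_pos (by exact_mod_cast hr) _
  induction m generalizing k with
  | nil => simp [VvecFrom]
  | cons a m ih =>
    rw [List.map_cons, VvecFrom, VvecFrom, ih _ (fun b hb => hm b (List.mem_cons_of_mem a hb)),
      smul_add, Finsupp.smul_single, smul_eq_mul, Real.rpow_neg (Nat.cast_nonneg r),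
      ← zpow_neg_one, ← zpow_add₀ ht.ne']
    have := hm a (by simp)
    congr 3
    omega

theorem sum_blockVecs (k : ℕ) (L : List (List ℕ)) :
    (blockVecs q r k L).sum = VvecFrom q r k L.flatten := by
  induction L generalizing k with
  | nil => rfl
  | cons B L ih => rw [blockVecs, List.sum_cons, ih, List.flatten_cons, VvecFrom_append]

theorem length_blockVecs (k : ℕ) (L : List (List ℕ)) : (blockVecs q r k L).length = L.length := by
  induction L generalizing k with
  | nil => rfl
  | cons B L ih => simp [blockVecs, ih]

theorem exists_of_mem_blockVecs {k : ℕ} {L : List (List ℕ)} {z : ℕ →₀ ℝ}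
    (hz : z ∈ blockVecs q r k L) : ∃ B ∈ L, ∃ k', z = VvecFrom q r k' B := by
  induction L generalizing k with
  | nil => simp [blockVecs] at hz
  | cons B L ih =>
    rcases List.mem_cons.1 hz with rfl | hz
    · exact ⟨B, by simp, k, rfl⟩
    · obtain ⟨B', hB', k', rfl⟩ := ih hz
      exact ⟨B', List.mem_cons_of_mem B hB', k', rfl⟩

theorem le_of_mem_support_of_mem_blockVecs {k : ℕ} {L : List (List ℕ)} {z : ℕ →₀ ℝ}
    (hz : z ∈ blockVecs q r k L) {a : ℕ} (ha : a ∈ z.support) : k ≤ a := by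
  induction L generalizing k with
  | nil => simp [blockVecs] at hz
  | cons B L ih =>
    rcases List.mem_cons.1 hz with rfl | hz
    · exact (Finset.mem_Ico.1 (support_VvecFrom_subset k B ha)).1
    · have := ih hz; omega

theorem pairwise_supportLT_blockVecs (k : ℕ) (L : List (List ℕ)) :
    (blockVecs q r k L).Pairwise SupportLT := by
  induction L generalizing k with
  | nil => exact List.Pairwise.nil
  | cons B L ih =>
    refine List.Pairwise.cons (fun z hz a ha b hb => ?_) (ih _)
    have ha' := (Finset.mem_Ico.1 (support_VvecFrom_subset k B ha)).2
    have hb' := le_of_mem_support_of_mem_blockVecs hz hb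
    omega

end Vectors

section Kqr

variable {q : ℝ} {r : ℕ}

theorem Kqr_tsirelsonClosed : TsirelsonClosed q r (Kqr q r) :=
  ⟨fun n => ⟨Set.mem_sInter.2 fun _ hS => (hS.1 n).1, Set.mem_sInter.2 fun _ hS => (hS.1 n).2⟩,
    fun l z hl hlr hz hsucc => Set.mem_sInter.2 fun S hS =>
      hS.2 l z hl hlr (fun i => Set.mem_sInter.1 (hz i) S hS) hsucc⟩

theorem single_one_mem_Kqr (n : ℕ) : Finsupp.single n 1 ∈ Kqr q r :=
  (Kqr_tsirelsonClosed.1 n).1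

theorem smul_sum_mem_Kqr {L : List (ℕ →₀ ℝ)} (hL : L ≠ []) (hLr : L.length ≤ r)
    (hK : ∀ z ∈ L, z ∈ Kqr q r) (hsucc : L.Pairwise SupportLT) :
    ((r : ℝ) ^ (-(1 / q) : ℝ)) • L.sum ∈ Kqr q r := by
  have h := Kqr_tsirelsonClosed.2 L.length L.get (List.length_pos_of_ne_nil hL) hLr
    (fun i => hK _ (List.get_mem L i)) (List.pairwise_iff_get.1 hsucc)
  rwa [← List.sum_ofFn, List.ofFn_get] at h

end Kqr

theorem List.sum_map_pred_lt {m : List ℕ} (hm : m ≠ []) (hpos : ∀ a ∈ m, 0 < a) :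
    (m.map (· - 1)).sum < m.sum := by
  induction m with
  | nil => exact absurd rfl hm
  | cons a m ih =>
    have ha := hpos a (by simp)
    have hle : (m.map (· - 1)).sum ≤ m.sum := by
      rcases eq_or_ne m [] with rfl | hm'
      · simp
      · exact (ih hm' fun b hb => hpos b (List.mem_cons_of_mem a hb)).le
    simp only [List.map_cons, List.sum_cons]
    omega

theorem VvecFrom_mem_Kqr (q : ℝ) {r : ℕ} (hr : 1 ≤ r) {m : List ℕ} (hm : m ≠ [])
    (hΦ : Phi r m ≤ 1) (k : ℕ) : VvecFrom q r k m ∈ Kqr q r := by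
  induction hsum : m.sum using Nat.strong_induction_on generalizing m k with
  | _ n ih =>
  rcases eq_or_ne m [0] with rfl | hm0
  · simpa [VvecFrom] using single_one_mem_Kqr k
  have hpos (a) (ha : a ∈ m) : 0 < a := pos_of_mem_of_Phi_le_one hr hm0 hΦ ha
  have hΦ' : Phi r (m.map (· - 1)) ≤ r := by
    rw [Phi_map_pred (by omega) hpos]
    nlinarith [(Nat.cast_pos.2 hr : (0 : ℝ) < r)]
  obtain ⟨L, hL, hLne, hblocks, hLr⟩ :=
    exists_blocks_length_le hr (by simpa using hm) hΦ'
  rw [VvecFrom_eq_smul_map_pred hr k hpos, ← hL, ← sum_blockVecs]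
  refine smul_sum_mem_Kqr ?_ (by rwa [length_blockVecs]) (fun z hz => ?_)
    (pairwise_supportLT_blockVecs k L)
  · rwa [← List.length_pos_iff, length_blockVecs, List.length_pos_iff]
  obtain ⟨B, hB, k', rfl⟩ := exists_of_mem_blockVecs hz
  have hBsum : B.sum ≤ (m.map (· - 1)).sum := by
    rw [← hL, List.sum_flatten]
    exact List.le_sum_of_mem (List.mem_map_of_mem hB)
  exact ih _ (hsum ▸ hBsum.trans_lt (List.sum_map_pred_lt hm hpos)) (hblocks B hB).1
    (hblocks B hB).2 k' rfl

theorem Vvec_mem_Kqr_general (q : ℝ) (r : ℕ) (hr : 2 ≤ r)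
    (m : List ℕ) (hm : m ≠ []) (hΦ : Phi r m ≤ 1) :
    Vvec q r m ∈ Kqr q r := by
  rw [Vvec_eq_VvecFrom_zero]
  exact VvecFrom_mem_Kqr q (by omega) hm hΦ 0

theorem Vvec_mem_Kqr (q : ℝ) (hq : 1 < q) (r : ℕ) (hr : 2 ≤ r)
    (m : List ℕ) (hm : m ≠ []) (hΦ : Phi r m ≤ 1) :
    Vvec q r m ∈ Kqr q r :=
  Vvec_mem_Kqr_general q r hr m hm hΦ
end

section
/- Fix 1 < q < ∞, r ∈ ℕ with r ≥ 2, t = r^(1/q). Let x be a finitely supported real sequence with all nonzero coordinates of the form ±t^(-j) for nonnegative integers j, with Σᵢ|x(i)|^q = 1 and at least one coordinate of modulus strictly less than 1 (i.e., not equal to ±1). Then there exist finitely supported sequences x_1 < x_2 < … < x_r (after a suitable permutation of coordinates of x) with nonzero coordinates in {±t^(-j) : j ≥ 1}, such that x = x_1 + … + x_r and Σᵢ|x_k(i)|^q = 1/r for each 1 ≤ k ≤ r. -/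
open List

/-!
Write `|x i| ^ q = r ^ (-j i)`; since the masses sum to `1` and some coordinate has modulus `< 1`,
every `j i` is at least `1`. Multiplying by `r ^ J`, `J = max j`, turns the masses into natural
numbers `r ^ (J - j i)` summing to `r * r ^ (J - 1)`, each dividing `r ^ (J - 1)`. List the support
by increasing `j` (decreasing modulus): every weight divides all earlier ones, so the prefix sums
cannot jump over a multiple of `r ^ (J - 1)`, and the list splits greedily into `r` consecutive
blocks of mass `1 / r`. A permutation of `ℕ` sending the list onto `0, 1, …, n - 1` makes the
blocks successive.
-/

namespace List

variable {α : Type*} (f : α → ℕ)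

theorem exists_eq_append_sum_map_eq {l : List α} {M : ℕ}
    (hchain : l.Pairwise fun a b => f b ∣ f a) (hdvd : ∀ a ∈ l, f a ∣ M)
    (hM : M ≤ (l.map f).sum) : ∃ l₁ l₂, l = l₁ ++ l₂ ∧ (l₁.map f).sum = M := by
  induction l generalizing M with
  | nil => exact ⟨[], [], rfl, (by simpa using hM : M = 0).symm⟩
  | cons a l ih =>
    rcases M.eq_zero_or_pos with rfl | hM₀
    · exact ⟨[], a :: l, rfl, rfl⟩
    rw [pairwise_cons] at hchain
    -- `f a ∣ M` prevents overshooting, and the later weights divide `f a`, hence `M - f a`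
    have ha : f a ≤ M := Nat.le_of_dvd hM₀ (hdvd a mem_cons_self)
    obtain ⟨l₁, l₂, rfl, hl₁⟩ := ih (M := M - f a) hchain.2
      (fun b hb => Nat.dvd_sub (hdvd b (mem_cons_of_mem a hb)) (hchain.1 b hb))
      (by simp only [map_cons, sum_cons] at hM; omega)
    exact ⟨a :: l₁, l₂, rfl, by simp only [map_cons, sum_cons, hl₁]; omega⟩

theorem exists_eq_flatten_ofFn_sum_map_eq {M : ℕ} {c : ℕ} {l : List α}
    (hchain : l.Pairwise fun a b => f b ∣ f a) (hdvd : ∀ a ∈ l, f a ∣ M)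
    (hpos : ∀ a ∈ l, 0 < f a) (hsum : (l.map f).sum = c * M) :
    ∃ P : Fin c → List α, l = (ofFn P).flatten ∧ ∀ k, ((P k).map f).sum = M := by
  induction c generalizing l with
  | zero =>
    have hl : l = [] := eq_nil_iff_forall_not_mem.mpr fun a ha =>
      (hpos a ha).ne' (sum_eq_zero_iff.mp (by simpa using hsum) _ (mem_map_of_mem ha))
    exact ⟨Fin.elim0, by simp [hl], fun k => k.elim0⟩
  | succ c ih =>
    obtain ⟨l₁, l₂, rfl, hl₁⟩ := exists_eq_append_sum_map_eq f hchain hdvd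
      (by rw [hsum]; exact Nat.le_mul_of_pos_left M c.succ_pos)
    obtain ⟨P, rfl, hP⟩ := ih (pairwise_append.mp hchain).2.1
      (fun a ha => hdvd a (mem_append_right l₁ ha)) (fun a ha => hpos a (mem_append_right l₁ ha))
      (by simp only [map_append, sum_append, hl₁, Nat.succ_mul] at hsum; omega)
    exact ⟨Fin.cons l₁ P, by simp [ofFn_succ], Fin.cases hl₁ hP⟩

end List

theorem List.Nodup.exists_perm_map_eq_range {L : List ℕ} (hL : L.Nodup) :
    ∃ σ : Equiv.Perm ℕ, L.map σ = range L.length := by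
  classical
  let s : Set ℕ := {a | a ∈ L}
  let f : s ↪ ℕ := ⟨fun a => L.idxOf a.1, fun a b h => Subtype.ext ((idxOf_inj a.2).mp h)⟩
  have hs : s.Finite := L.finite_toSet
  have : Finite s := hs.to_subtype
  have : Infinite ↥sᶜ := hs.infinite_compl.to_subtype
  have : Infinite ↥(Set.range f)ᶜ := (Set.finite_range f).infinite_compl.to_subtype
  obtain ⟨σ, hσ⟩ := Cardinal.extend_function f nonempty_equiv_of_countable
  refine ⟨σ, ext_getElem (by simp) fun i h₁ h₂ => ?_⟩
  rw [getElem_map, hσ ⟨_, getElem_mem _⟩, getElem_range]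
  exact hL.idxOf_getElem i _

theorem exists_perm_lt_of_mem_ofFn {r : ℕ} (P : Fin r → List ℕ) (hP : (ofFn P).flatten.Nodup) :
    ∃ σ : Equiv.Perm ℕ, ∀ k l, k < l → ∀ a ∈ P k, ∀ b ∈ P l, σ a < σ b := by
  obtain ⟨σ, hσ⟩ := hP.exists_perm_map_eq_range
  have h := hσ ▸ pairwise_lt_range
  rw [map_flatten, map_ofFn, pairwise_flatten, pairwise_ofFn] at h
  exact ⟨σ, fun k l hkl a ha b hb => h.2 hkl (σ a) (mem_map_of_mem ha) (σ b) (mem_map_of_mem hb)⟩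

theorem Finsupp.exists_perm_eq_sum_ordered_blocks {M β : Type*} [AddCommMonoid M] [AddCommMonoid β] {r : ℕ}
    (x : ℕ →₀ M) (P : Fin r → List ℕ) (hP : (ofFn P).flatten.Perm x.support.toList)
    (g : M → β) :
    ∃ (σ : Equiv.Perm ℕ) (y : Fin r → ℕ →₀ M), x.equivMapDomain σ = ∑ k, y k ∧
      (∀ k l, k < l → ∀ a ∈ (y k).support, ∀ b ∈ (y l).support, a < b) ∧
      (∀ k i, y k i ≠ 0 → ∃ a, y k i = x a) ∧
      ∀ k, ∑ i ∈ (y k).support, g (y k i) = ((P k).map (g ∘ x)).sum := by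
  classical
  have hnd : (ofFn P).flatten.Nodup := hP.nodup_iff.mpr x.support.nodup_toList
  have hmem : ∀ a, a ∈ x.support ↔ ∃ k, a ∈ P k := fun a => by
    rw [← Finset.mem_toList, ← hP.mem_iff, mem_flatten]
    simp
  obtain ⟨σ, hσ⟩ := exists_perm_lt_of_mem_ofFn P hnd
  have hunique : ∀ a k l, a ∈ P k → a ∈ P l → k = l := fun a k l hk hl => by
    by_contra hkl
    rcases lt_or_gt_of_ne hkl with h | h
    · exact (hσ k l h a hk a hl).false
    · exact (hσ l k h a hl a hk).false
  refine ⟨σ, fun k => (x.filter (· ∈ P k)).equivMapDomain σ, ?_, ?_, ?_, fun k => ?_⟩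
  · ext i
    simp only [Finset.sum_apply', equivMapDomain_apply, filter_apply]
    by_cases hi : σ.symm i ∈ x.support
    · obtain ⟨k, hk⟩ := (hmem _).mp hi
      rw [Finset.sum_eq_single k (fun l _ hlk => if_neg fun hl => hlk (hunique _ _ _ hl hk))
        (by simp), if_pos hk]
    · simp [notMem_support_iff.mp hi]
  · intro k l hkl a ha b hb
    simp only [mem_support_iff, equivMapDomain_apply, filter_apply, ne_eq, ite_eq_right_iff,
      Classical.not_imp] at ha hb
    simpa using hσ k l hkl _ ha.1 _ hb.1
  · intro k i hi
    simp only [equivMapDomain_apply, filter_apply] at hi ⊢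
    split_ifs at hi ⊢
    · exact ⟨_, rfl⟩
    · exact absurd rfl hi
  · have hPk : (P k).Nodup := (nodup_flatten.mp hnd).1 _ (mem_ofFn.mpr ⟨k, rfl⟩)
    change ((x.filter (· ∈ P k)).equivMapDomain σ).sum (fun _ v => g v) = _
    rw [sum_equivMapDomain, sum_filter_index, support_filter, ← sum_toFinset _ hPk]
    refine Finset.sum_congr (Finset.ext fun a => ?_) fun _ _ => rfl
    simp only [Finset.mem_filter, mem_toFinset, and_iff_right_iff_imp]
    exact fun ha => (hmem a).mpr ⟨k, ha⟩

theorem Real.rpow_one_div_zpow_rpow_s7 {r q : ℝ} (hr : 0 ≤ r) (hq : q ≠ 0) (n : ℤ) :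
    ((r ^ (1 / q)) ^ n) ^ q = r ^ n := by
  rw [← Real.rpow_intCast, ← Real.rpow_mul hr, ← Real.rpow_mul hr, ← Real.rpow_intCast]
  congr 1
  field_simp

theorem exists_blocks_sum_zpow_eq_inv {α : Type*} {r : ℕ} (hr : 0 < r) (s : Finset α)
    (j : α → ℕ) (hj : ∀ i ∈ s, 1 ≤ j i) (hsum : ∑ i ∈ s, (r : ℝ) ^ (-(j i : ℤ)) = 1) :
    ∃ P : Fin r → List α, (ofFn P).flatten.Perm s.toList ∧
      ∀ k, ((P k).map fun i => (r : ℝ) ^ (-(j i : ℤ))).sum = (r : ℝ)⁻¹ := by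
  obtain ⟨i₀, hi₀⟩ : s.Nonempty := Finset.nonempty_of_sum_ne_zero (by rw [hsum]; exact one_ne_zero)
  set J := s.sup j
  have hJ : 1 ≤ J := (hj i₀ hi₀).trans (Finset.le_sup hi₀)
  have hr₀ : (r : ℝ) ≠ 0 := by positivity
  have hscale : ∀ l : List α, (∀ i ∈ l, i ∈ s) →
      (((l.map fun i => r ^ (J - j i)).sum : ℕ) : ℝ) =
        (r : ℝ) ^ J * (l.map fun i => (r : ℝ) ^ (-(j i : ℤ))).sum := by
    intro l hl
    rw [Nat.cast_list_sum, map_map, ← sum_map_mul_left]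
    refine congrArg List.sum (map_congr_left fun i hi => ?_)
    have hjJ : j i ≤ J := Finset.le_sup (hl i hi)
    simp only [Function.comp_apply, Nat.cast_pow]
    rw [← zpow_natCast, ← zpow_natCast, ← zpow_add₀ hr₀, Nat.cast_sub hjJ]
    ring_nf
  let L := s.toList.mergeSort fun a b => j a ≤ j b
  have hLs : L.Perm s.toList := mergeSort_perm _ _
  have hLsorted : L.Pairwise fun a b => j a ≤ j b := by
    simpa using pairwise_mergeSort (le := fun a b => j a ≤ j b)
      (fun a b c hab hbc => by simp only [decide_eq_true_eq] at *; omega)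
      (fun a b => by simpa using le_total (j a) (j b)) s.toList
  have hLsum : (L.map fun i => r ^ (J - j i)).sum = r * r ^ (J - 1) := by
    rw [← pow_succ', Nat.sub_add_cancel hJ]
    have hL₁ : (L.map fun i => (r : ℝ) ^ (-(j i : ℤ))).sum = 1 := by
      rw [(hLs.map _).sum_eq, Finset.sum_map_toList, hsum]
    have := hscale L fun i hi => Finset.mem_toList.mp (hLs.subset hi)
    rw [hL₁, mul_one] at this
    exact_mod_cast this
  obtain ⟨P, hLP, hP⟩ := exists_eq_flatten_ofFn_sum_map_eq (fun i => r ^ (J - j i))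
    (hLsorted.imp fun h => pow_dvd_pow r (Nat.sub_le_sub_left h J))
    (fun i hi => pow_dvd_pow r (Nat.sub_le_sub_left
      (hj i (Finset.mem_toList.mp (hLs.subset hi))) J))
    (fun i _ => pow_pos hr _) hLsum
  refine ⟨P, hLP ▸ hLs, fun k => ?_⟩
  have := hscale (P k) fun i hi =>
    Finset.mem_toList.mp (hLs.subset (hLP ▸ mem_flatten.mpr ⟨P k, mem_ofFn.mpr ⟨k, rfl⟩, hi⟩))
  have hJ' : (r : ℝ) ^ J = r ^ (J - 1) * r := by rw [← pow_succ, Nat.sub_add_cancel hJ]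
  rw [hP k, Nat.cast_pow, hJ', mul_assoc] at this
  exact eq_inv_of_mul_eq_one_right
    (mul_left_cancel₀ (pow_ne_zero _ hr₀) (this.symm.trans (mul_one _).symm))

theorem decomposition_claim (q : ℝ) (hq : 1 < q) (r : ℕ) (hr : 2 ≤ r)
    (t : ℝ) (ht : t = (r : ℝ) ^ (1 / q : ℝ)) (x : ℕ →₀ ℝ)
    (hxC : ∀ i, x i ≠ 0 → ∃ j : ℕ, |x i| = t ^ (-(j : ℤ)))
    (hxnorm : ∑ i ∈ x.support, |x i| ^ q = 1)
    (hsmall : ∃ i ∈ x.support, |x i| < 1) :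
    ∃ (σ : Equiv.Perm ℕ) (y : Fin r → ℕ →₀ ℝ),
      Finsupp.equivMapDomain σ x = ∑ k, y k ∧
      (∀ k l : Fin r, k < l →
        ∀ a ∈ (y k).support, ∀ b ∈ (y l).support, a < b) ∧
      (∀ k, ∀ i, y k i ≠ 0 → ∃ j : ℕ, 1 ≤ j ∧ |y k i| = t ^ (-(j : ℤ))) ∧
      (∀ k, ∑ i ∈ (y k).support, |y k i| ^ q = 1 / (r : ℝ)) := by
  choose! j hj using hxC
  have hweight : ∀ i ∈ x.support, |x i| ^ q = (r : ℝ) ^ (-(j i : ℤ)) := fun i hi => by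
    rw [hj i (Finsupp.mem_support_iff.mp hi), ht,
      Real.rpow_one_div_zpow_rpow_s7 r.cast_nonneg (by positivity)]
  have hj₁ : ∀ i ∈ x.support, 1 ≤ j i := by
    obtain ⟨i₀, hi₀, hlt⟩ := hsmall
    intro i hi
    by_contra! h
    have h₁ : |x i| = 1 := by simp [hj i (Finsupp.mem_support_iff.mp hi), Nat.lt_one_iff.mp h]
    have := Finset.single_lt_sum (f := fun i => |x i| ^ q) (by rintro rfl; linarith) hi hi₀
      (Real.rpow_pos_of_pos (abs_pos.mpr (Finsupp.mem_support_iff.mp hi₀)) q) fun _ _ _ => by positivity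
    simp [h₁, hxnorm] at this
  obtain ⟨P, hP, hPsum⟩ := exists_blocks_sum_zpow_eq_inv (r := r) (by omega) x.support j hj₁
    (by rw [← hxnorm]; exact (Finset.sum_congr rfl hweight).symm)
  obtain ⟨σ, y, hxy, hlt, hval, hnorm⟩ := x.exists_perm_eq_sum_ordered_blocks P hP fun v : ℝ => |v| ^ q
  refine ⟨σ, y, hxy, hlt, fun k i hi => ?_, fun k => ?_⟩
  · obtain ⟨a, ha⟩ := hval k i hi
    rw [ha] at hi ⊢
    exact ⟨j a, hj₁ a (Finsupp.mem_support_iff.mpr hi), hj a hi⟩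
  · rw [hnorm, one_div, ← hPsum k]
    refine congrArg List.sum (map_congr_left fun a ha => hweight a ?_)
    exact Finset.mem_toList.mp (hP.subset (mem_flatten.mpr ⟨P k, mem_ofFn.mpr ⟨k, rfl⟩, ha⟩))
end

section
/- Fix 1 < q < ∞ and r ∈ ℕ with r ≥ 2, and let m = (m(1),…,m(n)) be a finite sequence of natural numbers with 1/r < Φ(m) ≤ 1, where n ≥ 2. Define k_0 = 1 and inductively k_{i+1} = max{k ∈ {k_i,…,n+1} : Φ(m(k_i),…,m(k-1)) ≤ 1/r} for i ≥ 0, stopping when k_l = n+1. Then l ≤ r. -/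
/-- The elements `m(a), …, m(b-1)` of `m` (positions counted from `1`). -/
def seg (m : List ℕ) (a b : ℕ) : List ℕ := (m.drop (a - 1)).take (b - a)

noncomputable def S (r : ℕ) (L : List ℕ) : ℝ := (L.map (fun c => (r:ℝ) ^ (-(c:ℤ)))).sum

lemma S_nil (r : ℕ) : S r [] = 0 := by simp [S]

lemma S_append (r : ℕ) (A B : List ℕ) : S r (A ++ B) = S r A + S r B := by simp [S]

lemma S_cons (r : ℕ) (a : ℕ) (L : List ℕ) :
    S r (a :: L) = (r:ℝ) ^ (-(a:ℤ)) + S r L := by simp [S]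

lemma S_nonneg (r : ℕ) (L : List ℕ) : 0 ≤ S r L := by
  apply List.sum_nonneg
  intro x hx
  simp only [List.mem_map] at hx
  obtain ⟨c, _, rfl⟩ := hx
  positivity

lemma phi_formula (r : ℕ) (a b : ℕ) (l : List ℕ) :
    Phi r (a :: b :: l) = 2 * S r (a :: b :: l) - (r:ℝ) ^ (-(a:ℤ))
      - (r:ℝ) ^ (-(((b :: l).getLast (List.cons_ne_nil _ _)) : ℤ)) := by
  have h := List.dropLast_append_getLast (List.cons_ne_nil b l)
  have hS : S r (b :: l)
      = S r ((b::l).dropLast) + (r:ℝ)^(-(((b::l).getLast (List.cons_ne_nil _ _)):ℤ)) := by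
    conv_lhs => rw [← h]
    simp [S_append, S]
  rw [show Phi r (a :: b :: l) = (r : ℝ) ^ (-(a : ℤ)) +
        2 * S r ((b :: l).dropLast) +
        (r : ℝ) ^ (-(((b :: l).getLast (List.cons_ne_nil _ _)) : ℤ)) from rfl]
  rw [S_cons, hS]
  ring

lemma phi_formula' (r : ℕ) (L : List ℕ) (h : L ≠ []) (h2 : 2 ≤ L.length) :
    Phi r L = 2 * S r L - (r:ℝ)^(-((L.head h : ℕ):ℤ)) - (r:ℝ)^(-((L.getLast h : ℕ):ℤ)) := by
  match L with
  | [a] => simp at h2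
  | a :: b :: l =>
    rw [phi_formula]
    simp [List.getLast_cons]

lemma phi_add (r : ℕ) (A B : List ℕ) (x : ℕ) (hA : A ≠ []) (hB : B ≠ []) :
    Phi r (A ++ x :: B) = Phi r (A ++ [x]) + Phi r (x :: B) := by
  have h1 : A ++ x :: B ≠ [] := by simp
  have h2 : A ++ [x] ≠ [] := by simp
  have h3 : x :: B ≠ [] := by simp
  have lA : 0 < A.length := List.length_pos_iff.mpr hA
  rw [phi_formula' r _ h1 (by simp only [List.length_append, List.length_cons]; omega),
      phi_formula' r _ h2 (by simp only [List.length_append, List.length_cons, List.length_nil]; omega),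
      phi_formula' r _ h3 (by simp only [List.length_cons]; have := List.length_pos_iff.mpr hB; omega)]
  have e1 : (A ++ x :: B).head h1 = A.head hA := List.head_append_of_ne_nil hA
  have e2 : (A ++ [x]).head h2 = A.head hA := List.head_append_of_ne_nil hA
  have e3 : (A ++ x :: B).getLast h1 = (x :: B).getLast h3 := by
    rw [List.getLast_append_of_ne_nil (h₂ := h3)]
  have e4 : (x :: B).getLast h3 = B.getLast hB := List.getLast_cons hB
  have e5 : (A ++ [x]).getLast h2 = x := by simp
  rw [e1, e2, e3, e4, e5, S_append, S_append, S_cons, S_cons, List.head_cons, S_nil]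
  ring

lemma phi_pos (r : ℕ) (hr : 0 < r) (L : List ℕ) (h : L ≠ []) : 0 < Phi r L := by
  have hrR : (0:ℝ) < r := by exact_mod_cast hr
  match L with
  | [a] =>
    show (0:ℝ) < (r : ℝ) ^ (-(a : ℤ))
    positivity
  | a :: b :: l =>
    show (0:ℝ) < (r : ℝ) ^ (-(a : ℤ)) +
        2 * (((b :: l).dropLast).map (fun c => (r : ℝ) ^ (-(c : ℤ)))).sum +
        (r : ℝ) ^ (-(((b :: l).getLast (List.cons_ne_nil _ _)) : ℤ))
    have h1 : (0:ℝ) < (r : ℝ) ^ (-(a : ℤ)) := by positivity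
    have h2 : (0:ℝ) < (r : ℝ) ^ (-(((b :: l).getLast (List.cons_ne_nil _ _)) : ℤ)) := by positivity
    have h3 := S_nonneg r ((b :: l).dropLast)
    simp only [S] at h3
    linarith

lemma seg_append (m : List ℕ) (a b c : ℕ) (h1 : 1 ≤ a) (h2 : a ≤ b) (h3 : b ≤ c) :
    seg m a c = seg m a b ++ seg m b c := by
  unfold seg
  rw [show c - a = (b - a) + (c - b) by omega, List.take_add]
  congr 1
  rw [List.drop_drop]
  congr 2
  omega

lemma seg_length (m : List ℕ) (a b : ℕ) :
    (seg m a b).length = min (b - a) (m.length - (a - 1)) := by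
  simp [seg]

lemma seg_ne_nil (m : List ℕ) (a b : ℕ) (h1 : 1 ≤ a) (h2 : a ≤ m.length) (h3 : a < b) :
    seg m a b ≠ [] := by
  apply List.ne_nil_of_length_pos
  rw [seg_length]
  omega

lemma seg_singleton (m : List ℕ) (b : ℕ) (h1 : 1 ≤ b) (h2 : b ≤ m.length) :
    ∃ x, seg m b (b + 1) = [x] := by
  apply List.length_eq_one_iff.mp
  rw [seg_length]
  omega

lemma seg_split (r : ℕ) (m : List ℕ) (a b c : ℕ) (h1 : 1 ≤ a) (h2 : a < b)
    (h3 : b + 1 < c) (h4 : c ≤ m.length + 1) :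
    Phi r (seg m a c) = Phi r (seg m a (b + 1)) + Phi r (seg m b c) := by
  obtain ⟨x, hx⟩ := seg_singleton m b (by omega) (by omega)
  have hA : seg m a b ≠ [] := seg_ne_nil m a b h1 (by omega) h2
  have hB : seg m (b + 1) c ≠ [] := seg_ne_nil m (b + 1) c (by omega) (by omega) (by omega)
  have eac : seg m a c = seg m a b ++ x :: seg m (b + 1) c := by
    rw [seg_append m a b c h1 (by omega) (by omega),
        seg_append m b (b + 1) c (by omega) (by omega) (by omega), hx]
    simp
  have eab : seg m a (b + 1) = seg m a b ++ [x] := by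
    rw [seg_append m a b (b + 1) h1 (by omega) (by omega), hx]
  have ebc : seg m b c = x :: seg m (b + 1) c := by
    rw [seg_append m b (b + 1) c (by omega) (by omega) (by omega), hx]
    simp
  rw [eac, eab, ebc]
  exact phi_add r _ _ x hA hB

lemma seg_whole (m : List ℕ) : seg m 1 (m.length + 1) = m := by
  simp [seg]

theorem num_of_pieces_le (q : ℝ) (hq : 1 < q) (r : ℕ) (hr : 2 ≤ r)
    (m : List ℕ) (n : ℕ) (hn : n = m.length) (hn2 : 2 ≤ n)
    (hΦ₁ : 1 / (r : ℝ) < Phi r m) (hΦ₂ : Phi r m ≤ 1)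
    (k : ℕ → ℕ) (l : ℕ) (hl : 1 ≤ l)
    (hk0 : k 0 = 1) (hkl : k l = n + 1)
    (hkint : ∀ i < l, k i < n + 1)
    (hkmax : ∀ i < l,
      IsGreatest {j | k i ≤ j ∧ j ≤ n + 1 ∧ Phi r (seg m (k i) j) ≤ 1 / (r : ℝ)}
        (k (i + 1))) :
    l ≤ r := by
  have hrR : (0:ℝ) < r := by positivity
  -- strict monotonicity of k
  have hmono : ∀ i < l, k i < k (i + 1) := by
    intro i hi
    have hle : k i ≤ k (i + 1) := (hkmax i hi).1.1
    rcases lt_or_eq_of_le hle with h | h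
    · exact h
    exfalso
    have hconst : ∀ d, i + d ≤ l → k (i + d) = k i := by
      intro d
      induction d with
      | zero => simp
      | succ d ih =>
        intro hdl
        have hid : i + d < l := by omega
        have h1 := hkmax (i + d) hid
        rw [ih (by omega)] at h1
        have h2 := hkmax i hi
        have h3 : k (i + d + 1) = k (i + 1) := h1.unique h2
        show k (i + d + 1) = k i
        omega
    have h4 := hconst (l - i) (by omega)
    rw [show i + (l - i) = l by omega] at h4
    have := hkint i hi
    omega
  have hk1 : ∀ j ≤ l, 1 ≤ k j := by
    intro j hj
    induction j with
    | zero => omega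
    | succ j ih =>
      have := hmono j (by omega)
      have := ih (by omega)
      omega
  -- pieces bound
  have hpiece : ∀ j, j + 1 < l → 1 / (r:ℝ) < Phi r (seg m (k j) (k (j + 1) + 1)) := by
    intro j hj
    by_contra hcon
    push_neg at hcon
    have hub := (hkmax j (by omega)).2
    have hmem : k (j + 1) + 1 ∈ {j' | k j ≤ j' ∧ j' ≤ n + 1 ∧
        Phi r (seg m (k j) j') ≤ 1 / (r : ℝ)} := by
      refine ⟨?_, ?_, hcon⟩
      · have := hmono j (by omega); omega
      · have := hkint (j + 1) hj; omega
    have := hub hmem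
    omega
  -- main downward induction
  have hmain : ∀ d j, j + d + 1 = l → ((d:ℝ) / r) < Phi r (seg m (k j) (n + 1)) := by
    intro d
    induction d with
    | zero =>
      intro j hj
      simp only [Nat.cast_zero, zero_div]
      apply phi_pos r (by omega)
      have h1 := hkint j (by omega)
      exact seg_ne_nil m (k j) (n + 1) (hk1 j (by omega)) (by omega) (by omega)
    | succ d ih =>
      intro j hj
      have hj1 : j + 1 < l := by omega
      have hble : k (j + 1) ≤ n := by have := hkint (j + 1) hj1; omega
      have hkjb : k j < k (j + 1) := hmono j (by omega)
      have hkj1 : 1 ≤ k j := hk1 j (by omega)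
      have h1 := hpiece j hj1
      by_cases hbn : k (j + 1) < n
      · have hsplit := seg_split r m (k j) (k (j + 1)) (n + 1) hkj1 hkjb (by omega) (by omega)
        have h2 := ih (j + 1) (by omega)
        rw [hsplit]
        have he : ((d:ℝ) + 1) / r = 1 / r + (d:ℝ) / r := by ring
        push_cast
        rw [he]
        exact add_lt_add h1 h2
      · have hbeq : k (j + 1) = n := by omega
        have hd0 : d = 0 := by
          by_contra hd
          have hj2 : j + 2 < l := by omega
          have h5 := hkint (j + 2) hj2
          have h6 : k (j + 1) < k (j + 2) := hmono (j + 1) (by omega)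
          omega
        subst hd0
        rw [hbeq] at h1
        push_cast
        simpa using h1
  have h0 := hmain (l - 1) 0 (by omega)
  rw [hk0] at h0
  rw [show n + 1 = m.length + 1 by omega, seg_whole] at h0
  have hlt : ((l - 1 : ℕ) : ℝ) < r := by
    rw [div_lt_iff₀ hrR] at h0
    nlinarith
  have : l - 1 < r := by exact_mod_cast hlt
  omega
end

section
/- Fix 1 < p < ∞, r ∈ ℕ with r ≥ 2, M = ⌊log₂ r⌋, α > 0 with α^M = r^(1/p). Let (x_n) be a block sequence of finitely supported sequences with coordinates in {±α^j : j ∈ ℤ} ∪ {0} satisfying α^(-2) ≤ ‖x_n‖_p ≤ α^(-1) for all n. Then there exists a block sequence (y_n) of blocks of (x_n), with coordinates in {±α^j : j ∈ ℤ} ∪ {0}, such that α^(-3) ≤ ‖J_m y_n‖_p ≤ 1 for all n, m. -/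
open scoped BigOperators Classical

/-- The `ℓ_p` norm of a finitely supported sequence. -/
noncomputable def lpNorm (p : ℝ) (x : ℕ →₀ ℝ) : ℝ :=
  (∑ i ∈ x.support, |x i| ^ p) ^ (1 / p : ℝ)

/-- Finitely supported sequences all of whose coordinates lie in
`C_α = {± α^j : j ∈ ℤ} ∪ {0}`. -/
def Nset (α : ℝ) : Set (ℕ →₀ ℝ) := {x | ∀ i, x i ≠ 0 → ∃ j : ℤ, |x i| = α ^ j}

/-- `J_m x` : the restriction of `x` to the coordinates `i` with
`α^{-m}·x(i) ∈ C_s`. -/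
noncomputable def Jpart (α s : ℝ) (m : ℕ) (x : ℕ →₀ ℝ) : ℕ →₀ ℝ :=
  x.filter (fun i => ∃ j : ℤ, |x i| = α ^ (m : ℤ) * s ^ j)

/-- `supp x₁ < supp x₂ < …` -/
def IsBlockSeq (x : ℕ → ℕ →₀ ℝ) : Prop :=
  ∀ n m : ℕ, n < m → ∀ a ∈ (x n).support, ∀ b ∈ (x m).support, a < b

/-!
Work with the `p`-th power `lpNormPow p` of the `ℓ_p` norm ("mass"). On `N_α` the pieces
`J_c x`, `c ∈ ℤ/M`, split the mass of `x`, and scaling by `α^{-u}` turns `J_{c+u}` into `J_c`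
while multiplying masses by `α^{-up}`. From `α^{Mp} = r ≥ 2^M` we get `α^p ≥ 2`, and every `x_n`
has mass in `[α^{-2p}, α^{-p}]`. Pass to a subsequence along which the mass of each class of
`x_n` is constant up to `ε`. A block of `y` takes, for every level `t < M`, about `α^{(L+t)p}`
fresh terms scaled by `α^{-(L+t)}`: each level carries the class masses of one term shifted by
`t`, so every `J_m y_n` collects, up to `ε`, the total mass of one `x_n`, which lies in
`[α^{-3p}, 1]`.
-/

open Finset Function

section DisjointSum

variable {α M : Type*} [AddCommMonoid M] {ι : Type*} {f : ι → α →₀ M}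

theorem disjoint_support_sum (hf : Pairwise (Disjoint on fun i => (f i).support)) {a : ι}
    {s : Finset ι} (ha : a ∉ s) : Disjoint (f a).support (∑ i ∈ s, f i).support := by
  classical
  refine Disjoint.mono_right Finsupp.support_finsetSum ?_
  exact (disjoint_biUnion_right _ _ _).2 fun i hi => hf (ne_of_mem_of_not_mem hi ha).symm

theorem map_sum_of_pairwise_disjoint_support {β : Type*} [AddCommMonoid β] (Φ : (α →₀ M) → β)
    (h0 : Φ 0 = 0) (hadd : ∀ x y, Disjoint x.support y.support → Φ (x + y) = Φ x + Φ y)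
    (hf : Pairwise (Disjoint on fun i => (f i).support)) (s : Finset ι) :
    Φ (∑ i ∈ s, f i) = ∑ i ∈ s, Φ (f i) := by
  classical
  induction s using Finset.induction_on with
  | empty => simpa using h0
  | insert a s ha ih =>
    rw [sum_insert ha, sum_insert ha, hadd _ _ (disjoint_support_sum hf ha), ih]

theorem sum_mem_of_pairwise_disjoint_support (S : Set (α →₀ M)) (h0 : 0 ∈ S)
    (hadd : ∀ x ∈ S, ∀ y ∈ S, Disjoint x.support y.support → x + y ∈ S)
    (hf : Pairwise (Disjoint on fun i => (f i).support)) (s : Finset ι) (hs : ∀ i ∈ s, f i ∈ S) :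
    ∑ i ∈ s, f i ∈ S := by
  classical
  induction s using Finset.induction_on with
  | empty => simpa using h0
  | insert a s ha ih =>
    rw [sum_insert ha]
    exact hadd _ (hs a (mem_insert_self a s)) _ (ih fun i hi => hs i (mem_insert_of_mem hi))
      (disjoint_support_sum hf ha)

end DisjointSum

noncomputable def lpNormPow (p : ℝ) (x : ℕ →₀ ℝ) : ℝ := ∑ i ∈ x.support, |x i| ^ p

theorem lpNorm_eq_lpNormPow_rpow (p : ℝ) (x : ℕ →₀ ℝ) : lpNorm p x = lpNormPow p x ^ (1 / p) :=
  rfl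

theorem lpNormPow_nonneg (p : ℝ) (x : ℕ →₀ ℝ) : 0 ≤ lpNormPow p x :=
  sum_nonneg fun _ _ => Real.rpow_nonneg (abs_nonneg _) _

theorem lpNormPow_zero (p : ℝ) : lpNormPow p 0 = 0 := by
  simp [lpNormPow]

theorem lpNormPow_add_of_disjoint (p : ℝ) {x y : ℕ →₀ ℝ} (h : Disjoint x.support y.support) :
    lpNormPow p (x + y) = lpNormPow p x + lpNormPow p y :=
  Finsupp.sum_add_index_of_disjoint h fun _ v => |v| ^ p

theorem lpNormPow_smul {p : ℝ} (hp : p ≠ 0) (c : ℝ) (x : ℕ →₀ ℝ) :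
    lpNormPow p (c • x) = |c| ^ p * lpNormPow p x := by
  rcases eq_or_ne c 0 with rfl | hc
  · simp [lpNormPow, Real.zero_rpow hp]
  · simp only [lpNormPow, Finsupp.support_smul_eq hc, mul_sum, Finsupp.smul_apply, smul_eq_mul,
      abs_mul, Real.mul_rpow (abs_nonneg _) (abs_nonneg _)]

theorem zpow_neg_rpow {α : ℝ} (hα : 0 < α) (p : ℝ) (u : ℕ) :
    (α ^ (-(u : ℤ))) ^ p = (α ^ (-p)) ^ u := by
  rw [← Real.rpow_intCast, ← Real.rpow_mul hα.le, ← Real.rpow_natCast, ← Real.rpow_mul hα.le]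
  push_cast
  ring_nf

theorem zpow_neg_le_lpNorm_iff {p α : ℝ} (hp : 0 < p) (hα : 0 < α) (u : ℕ) (x : ℕ →₀ ℝ) :
    α ^ (-(u : ℤ)) ≤ lpNorm p x ↔ (α ^ (-p)) ^ u ≤ lpNormPow p x := by
  rw [lpNorm_eq_lpNormPow_rpow, one_div, Real.le_rpow_inv_iff_of_pos (zpow_pos hα _).le
    (lpNormPow_nonneg p x) hp, zpow_neg_rpow hα]

theorem lpNorm_le_zpow_neg_iff {p α : ℝ} (hp : 0 < p) (hα : 0 < α) (u : ℕ) (x : ℕ →₀ ℝ) :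
    lpNorm p x ≤ α ^ (-(u : ℤ)) ↔ lpNormPow p x ≤ (α ^ (-p)) ^ u := by
  rw [lpNorm_eq_lpNormPow_rpow, one_div, Real.rpow_inv_le_iff_of_pos (lpNormPow_nonneg p x)
    (zpow_pos hα _).le hp, zpow_neg_rpow hα]

theorem two_le_rpow_of_pow_eq_rpow_inv {α p r : ℝ} {M : ℕ} (hp : 0 < p) (hα : 0 < α)
    (hM : M ≠ 0) (hr : 2 ^ M ≤ r) (hαM : α ^ M = r ^ (1 / p)) : 2 ≤ α ^ p := by
  rw [← pow_le_pow_iff_left₀ zero_le_two (Real.rpow_nonneg hα.le p) hM, Real.rpow_pow_comm hα.le,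
    hαM, one_div, Real.rpow_inv_rpow ((pow_nonneg zero_le_two M).trans hr) hp.ne']
  exact hr

section Jpart

variable {α s : ℝ}

theorem Jpart_apply (m : ℕ) (x : ℕ →₀ ℝ) (i : ℕ) :
    Jpart α s m x i = if ∃ j : ℤ, |x i| = α ^ (m : ℤ) * s ^ j then x i else 0 :=
  Finsupp.filter_apply _ _ _

theorem support_Jpart (m : ℕ) (x : ℕ →₀ ℝ) :
    (Jpart α s m x).support = x.support.filter fun i => ∃ j : ℤ, |x i| = α ^ (m : ℤ) * s ^ j :=
  Finsupp.support_filter _ _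

theorem support_Jpart_subset (m : ℕ) (x : ℕ →₀ ℝ) : (Jpart α s m x).support ⊆ x.support :=
  support_Jpart m x ▸ filter_subset _ _

theorem lpNormPow_Jpart (p : ℝ) (m : ℕ) (x : ℕ →₀ ℝ) :
    lpNormPow p (Jpart α s m x) =
      ∑ i ∈ x.support.filter (fun i => ∃ j : ℤ, |x i| = α ^ (m : ℤ) * s ^ j), |x i| ^ p := by
  rw [lpNormPow, support_Jpart]
  refine sum_congr rfl fun i hi => ?_
  rw [Jpart_apply, if_pos (mem_filter.1 hi).2]

theorem lpNormPow_Jpart_le (p : ℝ) (m : ℕ) (x : ℕ →₀ ℝ) :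
    lpNormPow p (Jpart α s m x) ≤ lpNormPow p x := by
  rw [lpNormPow_Jpart]
  exact sum_le_sum_of_subset_of_nonneg (filter_subset _ _)
    fun _ _ _ => Real.rpow_nonneg (abs_nonneg _) _

theorem Jpart_zero (m : ℕ) : Jpart α s m 0 = 0 :=
  Finsupp.filter_zero _

theorem Jpart_add_of_disjoint (m : ℕ) {x y : ℕ →₀ ℝ} (h : Disjoint x.support y.support) :
    Jpart α s m (x + y) = Jpart α s m x + Jpart α s m y := by
  ext i
  have hxy : x i = 0 ∨ y i = 0 := by
    by_contra! hne
    exact disjoint_left.1 h (Finsupp.mem_support_iff.2 hne.1) (Finsupp.mem_support_iff.2 hne.2)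
  simp only [Finsupp.add_apply, Jpart_apply]
  rcases hxy with h0 | h0 <;> simp [h0]

theorem Jpart_zpow_neg_smul (hα : 0 < α) (m u : ℕ) (x : ℕ →₀ ℝ) :
    Jpart α s m (α ^ (-(u : ℤ)) • x) = α ^ (-(u : ℤ)) • Jpart α s (m + u) x := by
  ext i
  have hshift : α ^ ((m + u : ℕ) : ℤ) = α ^ (u : ℤ) * α ^ (m : ℤ) := by
    rw [← zpow_add₀ hα.ne']
    push_cast
    ring_nf
  have hcond : (∃ j : ℤ, |α ^ (-(u : ℤ)) * x i| = α ^ (m : ℤ) * s ^ j) ↔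
      ∃ j : ℤ, |x i| = α ^ ((m + u : ℕ) : ℤ) * s ^ j := by
    simp only [zpow_neg, abs_mul, abs_inv, abs_of_pos (zpow_pos hα (u : ℤ)), hshift, mul_assoc]
    exact exists_congr fun j => (inv_mul_eq_iff_eq_mul₀ (zpow_pos hα _).ne')
  simp only [Jpart_apply, Finsupp.smul_apply, smul_eq_mul, mul_ite, mul_zero]
  exact if_congr hcond rfl rfl

theorem lpNormPow_Jpart_zpow_neg_smul {p : ℝ} (hp : p ≠ 0) (hα : 0 < α) (m u : ℕ)
    (x : ℕ →₀ ℝ) :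
    lpNormPow p (Jpart α s m (α ^ (-(u : ℤ)) • x)) =
      (α ^ (-p)) ^ u * lpNormPow p (Jpart α s (m + u) x) := by
  rw [Jpart_zpow_neg_smul hα, lpNormPow_smul hp, abs_of_pos (zpow_pos hα _), zpow_neg_rpow hα]

end Jpart

section Classes

variable {α : ℝ} {M : ℕ}

theorem exists_abs_eq_zpow_mul_iff (hα : 0 < α) (hα1 : α ≠ 1) (m : ℕ) {v : ℝ} {j₀ : ℤ}
    (hv : |v| = α ^ j₀) :
    (∃ j : ℤ, |v| = α ^ (m : ℤ) * (α ^ M) ^ j) ↔ (j₀ : ZMod M) = m := by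
  have hpow : ∀ j : ℤ, α ^ (m : ℤ) * (α ^ M) ^ j = α ^ ((m : ℤ) + M * j) := fun j => by
    rw [zpow_add₀ hα.ne', zpow_mul, zpow_natCast α M]
  simp only [hv, hpow, (zpow_right_injective₀ hα hα1).eq_iff]
  rw [← Int.cast_natCast (R := ZMod M) m, ZMod.intCast_eq_intCast_iff, Int.modEq_iff_dvd,
    dvd_sub_comm]
  constructor
  · rintro ⟨j, rfl⟩
    exact ⟨j, by ring⟩
  · rintro ⟨j, hj⟩
    exact ⟨j, by linarith⟩

theorem Jpart_congr (hα : 0 < α) (hα1 : α ≠ 1) {m m' : ℕ} (h : (m : ZMod M) = m')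
    {x : ℕ →₀ ℝ} (hx : x ∈ Nset α) : Jpart α (α ^ M) m x = Jpart α (α ^ M) m' x := by
  ext i
  rcases eq_or_ne (x i) 0 with h0 | h0
  · simp [Jpart_apply, h0]
  · obtain ⟨j₀, hj₀⟩ := hx i h0
    simp only [Jpart_apply, exists_abs_eq_zpow_mul_iff hα hα1 _ hj₀, h]

theorem sum_lpNormPow_Jpart [NeZero M] (hα : 0 < α) (hα1 : α ≠ 1) (p : ℝ) {x : ℕ →₀ ℝ}
    (hx : x ∈ Nset α) :
    ∑ c : ZMod M, lpNormPow p (Jpart α (α ^ M) c.val x) = lpNormPow p x := by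
  choose! J hJ using hx
  have hclass : ∀ c : ZMod M, x.support.filter
      (fun i => ∃ j : ℤ, |x i| = α ^ (c.val : ℤ) * (α ^ M) ^ j) =
        x.support.filter fun i => (J i : ZMod M) = c := fun c =>
    filter_congr fun i hi => by
      rw [exists_abs_eq_zpow_mul_iff hα hα1 _ (hJ i (Finsupp.mem_support_iff.1 hi)),
        ZMod.natCast_zmod_val]
  simp only [lpNormPow_Jpart, hclass]
  exact sum_fiberwise _ _ _

end Classes

section Nset

variable {α : ℝ}

theorem zero_mem_Nset : (0 : ℕ →₀ ℝ) ∈ Nset α := fun _ h => absurd rfl h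

theorem zpow_smul_mem_Nset (hα : 0 < α) (t : ℤ) {x : ℕ →₀ ℝ} (hx : x ∈ Nset α) :
    α ^ t • x ∈ Nset α := by
  intro i hi
  rw [Finsupp.smul_apply, smul_eq_mul] at hi ⊢
  obtain ⟨j, hj⟩ := hx i (right_ne_zero_of_mul hi)
  exact ⟨t + j, by rw [abs_mul, abs_of_pos (zpow_pos hα _), hj, zpow_add₀ hα.ne']⟩

theorem add_mem_Nset_of_disjoint {x y : ℕ →₀ ℝ} (hx : x ∈ Nset α) (hy : y ∈ Nset α)
    (h : Disjoint x.support y.support) : x + y ∈ Nset α := by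
  intro i hi
  rw [Finsupp.add_apply] at hi ⊢
  by_cases hxi : x i = 0
  · rw [hxi, zero_add] at hi ⊢
    exact hy i hi
  · rw [Finsupp.notMem_support_iff.1 (disjoint_left.1 h (Finsupp.mem_support_iff.2 hxi)),
      add_zero] at hi ⊢
    exact hx i hi

end Nset

theorem IsBlockSeq.pairwise_disjoint_support {x : ℕ → ℕ →₀ ℝ} (hx : IsBlockSeq x) :
    Pairwise (Disjoint on fun n => (x n).support) := by
  intro n m hnm
  refine disjoint_left.2 fun a ha ha' => ?_
  rcases hnm.lt_or_gt with h | h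
  · exact lt_irrefl a (hx n m h a ha a ha')
  · exact lt_irrefl a (hx m n h a ha' a ha)

section BlockComb

variable {ι : Type*} {x : ℕ → ℕ →₀ ℝ} {g : ℕ × ι → ℕ} (a : ι → ℝ)

theorem pairwise_disjoint_support_smul_comp (hx : IsBlockSeq x) (hg : Injective g) (n : ℕ) :
    Pairwise (Disjoint on fun s => (a s • x (g (n, s))).support) := fun _ _ hss' =>
  (hx.pairwise_disjoint_support fun h => hss' (congrArg Prod.snd (hg h))).mono
    Finsupp.support_smul Finsupp.support_smul

variable [Fintype ι]

noncomputable def blockComb (x : ℕ → ℕ →₀ ℝ) (g : ℕ × ι → ℕ) (a : ι → ℝ) (n : ℕ) : ℕ →₀ ℝ :=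
  ∑ s, a s • x (g (n, s))

theorem isBlockSeq_blockComb (hx : IsBlockSeq x)
    (hlt : ∀ n m s s', n < m → g (n, s) < g (m, s')) : IsBlockSeq (blockComb x g a) := by
  classical
  intro n m hnm i hi k hk
  obtain ⟨s, -, his⟩ := mem_biUnion.1 (Finsupp.support_finsetSum hi)
  obtain ⟨s', -, hks'⟩ := mem_biUnion.1 (Finsupp.support_finsetSum hk)
  exact hx _ _ (hlt n m s s' hnm) i (Finsupp.support_smul his) k (Finsupp.support_smul hks')

theorem blockComb_mem_Nset {α : ℝ} (hx : IsBlockSeq x) (hg : Injective g) (n : ℕ)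
    (hN : ∀ s, a s • x (g (n, s)) ∈ Nset α) : blockComb x g a n ∈ Nset α :=
  sum_mem_of_pairwise_disjoint_support _ zero_mem_Nset
    (fun _ hy _ hz => add_mem_Nset_of_disjoint hy hz)
    (pairwise_disjoint_support_smul_comp a hx hg n) _ fun s _ => hN s

theorem lpNormPow_Jpart_blockComb {α s : ℝ} (hx : IsBlockSeq x) (hg : Injective g) (p : ℝ)
    (m n : ℕ) :
    lpNormPow p (Jpart α s m (blockComb x g a n)) =
      ∑ i, lpNormPow p (Jpart α s m (a i • x (g (n, i)))) := by
  have hJ := map_sum_of_pairwise_disjoint_support (Jpart α s m) (Jpart_zero m)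
    (fun _ _ => Jpart_add_of_disjoint m) (pairwise_disjoint_support_smul_comp a hx hg n) univ
  rw [blockComb, hJ]
  refine map_sum_of_pairwise_disjoint_support _ (lpNormPow_zero p)
    (fun _ _ => lpNormPow_add_of_disjoint p) ?_ _
  exact fun i j hij => ((pairwise_disjoint_support_smul_comp a hx hg n) hij).mono
    (support_Jpart_subset m _) (support_Jpart_subset m _)

theorem exists_blockComb_eq_sum (hg : Injective g)
    (hlt : ∀ n m s s', n < m → g (n, s) < g (m, s')) :
    ∃ (c : ℕ → ℝ) (F : ℕ → Finset ℕ), (∀ n, blockComb x g a n = ∑ k ∈ F n, c k • x k) ∧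
      ∀ n m : ℕ, n < m → ∀ i ∈ F n, ∀ k ∈ F m, i < k := by
  classical
  refine ⟨extend g (fun q => a q.2) 0, fun n => univ.image fun s => g (n, s), fun n => ?_, ?_⟩
  · rw [sum_image fun s _ s' _ h => congrArg Prod.snd (hg h), blockComb]
    simp only [hg.extend_apply]
  · intro n m hnm i hi k hk
    obtain ⟨s, -, rfl⟩ := mem_image.1 hi
    obtain ⟨s', -, rfl⟩ := mem_image.1 hk
    exact hlt n m s s' hnm

end BlockComb

noncomputable def groupIndex (ι : Type*) [Fintype ι] (e : ℕ → ℕ) (q : ℕ × ι) : ℕ :=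
  e (q.1 * Fintype.card ι + Fintype.equivFin ι q.2)

section GroupIndex

variable {ι : Type*} [Fintype ι] {e : ℕ → ℕ}

theorem groupIndex_lt (he : StrictMono e) {n m : ℕ} (h : n < m) (s s' : ι) :
    groupIndex ι e (n, s) < groupIndex ι e (m, s') := by
  apply he
  dsimp only
  have hs := (Fintype.equivFin ι s).isLt
  have hnm : (n + 1) * Fintype.card ι ≤ m * Fintype.card ι := Nat.mul_le_mul_right _ h
  simp only [add_mul, one_mul] at hnm
  omega

theorem groupIndex_injective (he : StrictMono e) : Injective (groupIndex ι e) := by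
  rintro ⟨n, s⟩ ⟨m, s'⟩ h
  rcases lt_trichotomy n m with hnm | rfl | hnm
  · exact absurd h (groupIndex_lt he hnm s s').ne
  · have := he.injective h
    simp only [add_right_inj, Fin.val_inj, EmbeddingLike.apply_eq_iff_eq] at this
    rw [this]
  · exact absurd h (groupIndex_lt he hnm s' s).ne'

end GroupIndex

theorem exists_strictMono_forall_le_le_add {κ : Type*} [Finite κ] (f : ℕ → κ → ℝ)
    (hf0 : ∀ k c, 0 ≤ f k c) (hf1 : ∀ k c, f k c ≤ 1) {ε : ℝ} (hε : 0 < ε) :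
    ∃ (e : ℕ → ℕ) (v : κ → ℝ), StrictMono e ∧ (∀ c, 0 ≤ v c) ∧
      ∀ n c, v c ≤ f (e n) c ∧ f (e n) c ≤ v c + ε := by
  have hB : ∀ k c, ⌊f k c / ε⌋₊ < ⌊ε⁻¹⌋₊ + 1 := fun k c =>
    Nat.lt_succ_of_le (Nat.floor_mono (by simpa using div_le_div_of_nonneg_right (hf1 k c) hε.le))
  let B : ℕ → κ → Fin (⌊ε⁻¹⌋₊ + 1) := fun k c => ⟨⌊f k c / ε⌋₊, hB k c⟩
  obtain ⟨w, hw⟩ := Finite.exists_infinite_fiber B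
  obtain ⟨e, he, hew⟩ := Filter.extraction_of_frequently_atTop
    (Nat.frequently_atTop_iff_infinite.2 (Set.infinite_coe_iff.1 hw))
  refine ⟨e, fun c => (w c : ℕ) * ε, he, fun c => by positivity, fun n c => ?_⟩
  have hfloor : ⌊f (e n) c / ε⌋₊ = w c := congrArg Fin.val (congrFun (hew n) c)
  constructor
  · rw [← le_div_iff₀ hε, ← hfloor]
    exact Nat.floor_le (div_nonneg (hf0 _ _) hε.le)
  · have := hfloor ▸ Nat.lt_floor_add_one (f (e n) c / ε)
    rw [div_lt_iff₀ hε] at this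
    linarith

theorem natFloor_inv_mul_le_one {w : ℝ} (hw : 0 ≤ w) : ⌊w⁻¹⌋₊ * w ≤ 1 := by
  rcases hw.eq_or_lt with rfl | hw
  · simp
  · calc ⌊w⁻¹⌋₊ * w ≤ w⁻¹ * w := by gcongr; exact Nat.floor_le (inv_nonneg.2 hw.le)
      _ = 1 := inv_mul_cancel₀ hw.ne'

theorem one_sub_le_natFloor_inv_mul {w : ℝ} (hw : 0 < w) : 1 - w ≤ ⌊w⁻¹⌋₊ * w := by
  have h := mul_lt_mul_of_pos_right (Nat.lt_floor_add_one w⁻¹) hw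
  rw [inv_mul_cancel₀ hw.ne'] at h
  linarith

section Averaging

variable {τ : Type*} [Fintype τ] {N : τ → ℕ} {W v : τ → ℝ} {B : (t : τ) → Fin (N t) → ℝ}
  {ε : ℝ}

theorem sum_sigma_mul_le (hW : ∀ t, 0 ≤ W t) (hNW : ∀ t, N t * W t ≤ 1)
    (hB : ∀ t i, B t i ≤ v t + ε) (hv : ∀ t, 0 ≤ v t) (hε : 0 ≤ ε) :
    ∑ t, ∑ i, W t * B t i ≤ ∑ t, v t + Fintype.card τ * ε := by
  calc ∑ t, ∑ i, W t * B t i ≤ ∑ t, ∑ _i : Fin (N t), W t * (v t + ε) :=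
        sum_le_sum fun t _ => sum_le_sum fun i _ => mul_le_mul_of_nonneg_left (hB t i) (hW t)
    _ = ∑ t, (N t * W t) * (v t + ε) := by simp [mul_assoc]
    _ ≤ ∑ t, (v t + ε) := sum_le_sum fun t _ =>
        mul_le_of_le_one_left (add_nonneg (hv t) hε) (hNW t)
    _ = ∑ t, v t + Fintype.card τ * ε := by simp [sum_add_distrib]

theorem mul_sum_le_sum_sigma_mul (hW : ∀ t, 0 ≤ W t) (hNW : ∀ t, 1 - ε ≤ N t * W t)
    (hB : ∀ t i, v t ≤ B t i) (hv : ∀ t, 0 ≤ v t) :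
    (1 - ε) * ∑ t, v t ≤ ∑ t, ∑ i, W t * B t i := by
  rw [mul_sum]
  calc ∑ t, (1 - ε) * v t ≤ ∑ t, (N t * W t) * v t :=
        sum_le_sum fun t _ => mul_le_mul_of_nonneg_right (hNW t) (hv t)
    _ = ∑ t, ∑ _i : Fin (N t), W t * v t := by simp [mul_assoc]
    _ ≤ ∑ t, ∑ i, W t * B t i :=
        sum_le_sum fun t _ => sum_le_sum fun i _ => mul_le_mul_of_nonneg_left (hB t i) (hW t)

end Averaging

section LevelAverage

variable {α p : ℝ} {M : ℕ}

noncomputable def levelMass (α p : ℝ) (M : ℕ) (x : ℕ →₀ ℝ) (c : ZMod M) : ℝ :=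
  lpNormPow p (Jpart α (α ^ M) c.val x)

theorem levelMass_nonneg (x : ℕ →₀ ℝ) (c : ZMod M) : 0 ≤ levelMass α p M x c :=
  lpNormPow_nonneg p _

theorem levelMass_le (x : ℕ →₀ ℝ) (c : ZMod M) : levelMass α p M x c ≤ lpNormPow p x :=
  lpNormPow_Jpart_le p _ x

variable [NeZero M]

theorem sum_levelMass (hα : 0 < α) (hα1 : α ≠ 1) {x : ℕ →₀ ℝ} (hx : x ∈ Nset α) :
    ∑ c, levelMass α p M x c = lpNormPow p x :=
  sum_lpNormPow_Jpart hα hα1 p hx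

theorem lpNormPow_Jpart_eq_levelMass (hα : 0 < α) (hα1 : α ≠ 1) (m : ℕ) {x : ℕ →₀ ℝ}
    (hx : x ∈ Nset α) : lpNormPow p (Jpart α (α ^ M) m x) = levelMass α p M x m := by
  rw [levelMass, Jpart_congr hα hα1 (ZMod.natCast_zmod_val (m : ZMod M)).symm hx]

abbrev LevelSlot (β : ℝ) (M L : ℕ) : Type := Σ t : ZMod M, Fin ⌊(β ^ (L + t.val))⁻¹⌋₊

noncomputable def levelAverage (α p : ℝ) (M L : ℕ) [NeZero M] (x : ℕ → ℕ →₀ ℝ) (e : ℕ → ℕ) :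
    ℕ → ℕ →₀ ℝ :=
  blockComb x (groupIndex (LevelSlot (α ^ (-p)) M L) e)
    fun s => α ^ (-((L + s.1.val : ℕ) : ℤ))

variable {L : ℕ} {x : ℕ → ℕ →₀ ℝ} {e : ℕ → ℕ}

theorem lpNormPow_Jpart_levelAverage (hp : p ≠ 0) (hα : 0 < α) (hα1 : α ≠ 1)
    (hx : IsBlockSeq x) (hxN : ∀ k, x k ∈ Nset α) (he : StrictMono e) (m n : ℕ) :
    lpNormPow p (Jpart α (α ^ M) m (levelAverage α p M L x e n)) =
      ∑ t : ZMod M, ∑ i : Fin ⌊((α ^ (-p)) ^ (L + t.val))⁻¹⌋₊, (α ^ (-p)) ^ (L + t.val) *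
        levelMass α p M (x (groupIndex (LevelSlot (α ^ (-p)) M L) e (n, ⟨t, i⟩)))
          ((m + L : ℕ) + t) := by
  rw [levelAverage, lpNormPow_Jpart_blockComb _ hx (groupIndex_injective he), Fintype.sum_sigma]
  refine sum_congr rfl fun t _ => sum_congr rfl fun i _ => ?_
  rw [lpNormPow_Jpart_zpow_neg_smul hp hα, lpNormPow_Jpart_eq_levelMass hα hα1 _ (hxN _)]
  push_cast
  rw [ZMod.natCast_zmod_val, add_assoc]

theorem lpNormPow_Jpart_levelAverage_mem_Icc (hp : p ≠ 0) (hα : 0 < α) (hα1 : α ≠ 1)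
    (hβ : α ^ (-p) ≤ 1) (hx : IsBlockSeq x) (hxN : ∀ k, x k ∈ Nset α) (he : StrictMono e)
    {v : ZMod M → ℝ} {ε : ℝ} (hε : 0 < ε) (hL : (α ^ (-p)) ^ L ≤ ε) (hv0 : ∀ c, 0 ≤ v c)
    (hv : ∀ k c, v c ≤ levelMass α p M (x (e k)) c ∧ levelMass α p M (x (e k)) c ≤ v c + ε)
    (m n : ℕ) :
    lpNormPow p (Jpart α (α ^ M) m (levelAverage α p M L x e n)) ∈
      Set.Icc ((1 - ε) * ∑ c, v c) (∑ c, v c + M * ε) := by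
  have hβ0 : 0 < α ^ (-p) := Real.rpow_pos_of_pos hα _
  have hW : ∀ t : ZMod M, 1 - ε ≤ ⌊((α ^ (-p)) ^ (L + t.val))⁻¹⌋₊ * (α ^ (-p)) ^ (L + t.val) :=
    fun t => (sub_le_sub_left ((pow_le_pow_of_le_one hβ0.le hβ (Nat.le_add_right _ _)).trans hL)
      _).trans (one_sub_le_natFloor_inv_mul (pow_pos hβ0 _))
  have hshift : ∑ t : ZMod M, v ((m + L : ℕ) + t) = ∑ c, v c :=
    Equiv.sum_comp (Equiv.addLeft _) v
  rw [lpNormPow_Jpart_levelAverage hp hα hα1 hx hxN he, ← hshift]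
  constructor
  · exact mul_sum_le_sum_sigma_mul (fun _ => (pow_pos hβ0 _).le) hW
      (fun _ _ => (hv _ _).1) fun _ => hv0 _
  · refine (sum_sigma_mul_le (v := fun t => v ((m + L : ℕ) + t))
      (fun _ => (pow_pos hβ0 _).le) (fun _ => natFloor_inv_mul_le_one (pow_pos hβ0 _).le)
      (fun _ _ => (hv _ _).2) (fun _ => hv0 _) hε.le).trans_eq ?_
    rw [ZMod.card]

end LevelAverage

theorem exists_levelAverage_lpNormPow_Jpart_mem_Icc {α p : ℝ} {M : ℕ} [NeZero M] (hp : p ≠ 0)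
    (hα : 0 < α) (hα1 : α ≠ 1) (hβ : α ^ (-p) ≤ 1 / 2) {x : ℕ → ℕ →₀ ℝ} (hx : IsBlockSeq x)
    (hxN : ∀ k, x k ∈ Nset α) (hlo : ∀ k, (α ^ (-p)) ^ 2 ≤ lpNormPow p (x k))
    (hhi : ∀ k, lpNormPow p (x k) ≤ α ^ (-p)) :
    ∃ (L : ℕ) (e : ℕ → ℕ), StrictMono e ∧ ∀ n m : ℕ,
      lpNormPow p (Jpart α (α ^ M) m (levelAverage α p M L x e n)) ∈
        Set.Icc ((α ^ (-p)) ^ 3) 1 := by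
  set β := α ^ (-p)
  have hβ0 : 0 < β := Real.rpow_pos_of_pos hα _
  have hM : (1 : ℝ) ≤ M := Nat.one_le_cast.2 (Nat.pos_of_ne_zero (NeZero.ne M))
  -- `M ε = β² / 4` gives `(1 - ε) (β² - M ε) ≥ β³` and `β + M ε ≤ 1`, as `β ≤ 1/2`.
  set ε := β ^ 2 / (4 * M)
  have hε : 0 < ε := by positivity
  have hMε : M * ε = β ^ 2 / 4 := by simp only [ε]; field_simp
  obtain ⟨e, v, he, hv0, hv⟩ :=
    exists_strictMono_forall_le_le_add (fun k => levelMass α p M (x k))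
      (fun _ _ => levelMass_nonneg _ _)
      (fun k c => (levelMass_le _ c).trans ((hhi k).trans (by linarith))) hε
  obtain ⟨L, hL⟩ := exists_pow_lt_of_lt_one hε (by linarith : β < 1)
  have hsum_hi : ∑ c, v c ≤ β := (sum_le_sum fun c _ => (hv 0 c).1).trans
    ((sum_levelMass hα hα1 (hxN _)).trans_le (hhi _))
  have hsum_lo : β ^ 2 - M * ε ≤ ∑ c, v c := by
    have h := sum_le_sum fun c (_ : c ∈ univ) => (hv 0 c).2
    rw [sum_add_distrib, sum_levelMass hα hα1 (hxN _), sum_const, card_univ, ZMod.card,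
      nsmul_eq_mul] at h
    linarith [hlo (e 0)]
  refine ⟨L, e, he, fun n m => ?_⟩
  obtain ⟨h1, h2⟩ := lpNormPow_Jpart_levelAverage_mem_Icc hp hα hα1 (by linarith) hx hxN he hε
    hL.le hv0 hv m n
  constructor <;> nlinarith

theorem approximation_lemma (p : ℝ) (hp : 1 < p) (r : ℕ) (hr : 2 ≤ r)
    (M : ℕ) (hM : M = Nat.log 2 r)
    (α : ℝ) (hα : 0 < α) (hαM : α ^ M = (r : ℝ) ^ (1 / p : ℝ))
    (x : ℕ → ℕ →₀ ℝ) (hblock : IsBlockSeq x) (hxN : ∀ n, x n ∈ Nset α)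
    (hlo : ∀ n, α ^ (-2 : ℤ) ≤ lpNorm p (x n))
    (hhi : ∀ n, lpNorm p (x n) ≤ α ^ (-1 : ℤ)) :
    ∃ (y : ℕ → ℕ →₀ ℝ) (c : ℕ → ℝ) (F : ℕ → Finset ℕ),
      (∀ n, y n = ∑ k ∈ F n, c k • x k) ∧
      (∀ n m : ℕ, n < m → ∀ a ∈ F n, ∀ b ∈ F m, a < b) ∧
      IsBlockSeq y ∧
      (∀ n, y n ∈ Nset α) ∧
      (∀ n m : ℕ, α ^ (-3 : ℤ) ≤ lpNorm p (Jpart α ((r : ℝ) ^ (1 / p : ℝ)) m (y n))) ∧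
      (∀ n m : ℕ, lpNorm p (Jpart α ((r : ℝ) ^ (1 / p : ℝ)) m (y n)) ≤ 1) := by
  have hp0 : 0 < p := by linarith
  have hM0 : M ≠ 0 := hM ▸ (Nat.log_pos one_lt_two hr).ne'
  have : NeZero M := ⟨hM0⟩
  have hαp : 2 ≤ α ^ p := two_le_rpow_of_pow_eq_rpow_inv hp0 hα hM0
    (by exact_mod_cast hM ▸ Nat.pow_log_le_self 2 (by omega : r ≠ 0)) hαM
  have hα1 : α ≠ 1 := by rintro rfl; norm_num at hαp
  have hβ : α ^ (-p) ≤ 1 / 2 := by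
    rw [Real.rpow_neg hα.le, one_div]; exact inv_anti₀ two_pos hαp
  obtain ⟨L, e, he, hy⟩ := exists_levelAverage_lpNormPow_Jpart_mem_Icc (M := M) hp0.ne' hα hα1
    hβ hblock hxN (fun k => (zpow_neg_le_lpNorm_iff hp0 hα 2 _).1 (hlo k))
    (fun k => by simpa using (lpNorm_le_zpow_neg_iff hp0 hα 1 _).1 (by simpa using hhi k))
  have hg := groupIndex_injective (ι := LevelSlot (α ^ (-p)) M L) he
  have hlt := fun n m s s' (h : n < m) => groupIndex_lt (ι := LevelSlot (α ^ (-p)) M L) he h s s'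
  obtain ⟨c, F, hyF, hF⟩ := exists_blockComb_eq_sum (x := x) _ hg hlt
  refine ⟨levelAverage α p M L x e, c, F, hyF, hF, isBlockSeq_blockComb _ hblock hlt,
    fun n => blockComb_mem_Nset _ hblock hg n fun _ => zpow_smul_mem_Nset hα _ (hxN _),
    fun n m => ?_, fun n m => ?_⟩ <;> rw [← hαM]
  · exact (zpow_neg_le_lpNorm_iff hp0 hα 3 _).2 (hy n m).1
  · simpa using (lpNorm_le_zpow_neg_iff hp0 hα 0 _).2 (by simpa using (hy n m).2)
end

section
/- Fix 1 < p, q < ∞ with 1/p + 1/q = 1, r ∈ ℕ with r ≥ 2, M = ⌊log₂ r⌋, α with α^M = r^(1/p), and s = r^(1/p). If α^(-4) ≤ ‖J_m x‖_p ≤ 1 for all 0 ≤ m < M, where x ∈ N_α, then |x|_{p,r} ≤ Σ_{m=1}^{M} α^(-m) + Σ_{m=0}^{M-1} α^(-m(p-1)) ≤ 6(p+q). -/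
open scoped BigOperators Classical

def TsirelsonModClosed (q : ℝ) (r : ℕ) (S : Set (ℕ →₀ ℝ)) : Prop :=
  (∀ n : ℕ, Finsupp.single n 1 ∈ S ∧ Finsupp.single n (-1) ∈ S) ∧
  ∀ (l : ℕ) (z : Fin l → ℕ →₀ ℝ), 1 ≤ l → l ≤ r → (∀ i, z i ∈ S) →
    (∀ i j : Fin l, i ≠ j → Disjoint (z i).support (z j).support) →
    ((r : ℝ) ^ (-(1 / q) : ℝ)) • (∑ i, z i) ∈ S

def KMqr (q : ℝ) (r : ℕ) : Set (ℕ →₀ ℝ) := ⋂₀ {S | TsirelsonModClosed q r S}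

/-- The modified Tsirelson-type norm `|x|_{p,r}`. -/
noncomputable def modifiedNorm (q : ℝ) (r : ℕ) (x : ℕ →₀ ℝ) : ℝ :=
  sSup ((fun y => ∑ i ∈ x.support, x i * y i) '' KMqr q r)

/-!
Since `s = α ^ M`, the `α`-exponent of a coordinate of `x ∈ N_α` is `m + M j` for exactly one
`m < M`, so `x = ∑_{m < M} J_m x`. Every `y` in the norming set satisfies `⟨z, y⟩ ≤ ‖z‖_p`,
and `⟨z, y⟩ ≤ c + ‖z‖_p ^ p / (s c) ^ (p - 1)` whenever the nonzero `|z i|` lie in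
`c s^{-ℕ}`: both bounds hold for `± e_n` and survive `(z_k) ↦ r^{-1/q} ∑ z_k` (Hölder for the
first; for the second, a piece of `z` reaching the top level `c` is handled by the first
bound, the others sit one level lower). As `‖J_m x‖_p ≤ 1`, for `m ≥ 1` the coordinates of
`J_m x` lie in `α^{m-M} s^{-ℕ}`, whence `⟨J_m x, y⟩ ≤ α^{m-M} + α^{-m(p-1)}`; for `m = 0`
the first bound gives `1`. The final bound follows from geometric series, `2^{1/p} ≤ α` and
`2^a - 1 ≥ a log 2`.
-/

open Finset

namespace TsirelsonNorm

noncomputable def pairing (z y : ℕ →₀ ℝ) : ℝ := ∑ i ∈ z.support, z i * y i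

noncomputable def lpNormPow (p : ℝ) (z : ℕ →₀ ℝ) : ℝ := ∑ i ∈ z.support, |z i| ^ p

noncomputable def restrictTo (z w : ℕ →₀ ℝ) : ℕ →₀ ℝ := z.filter fun i => w i ≠ 0

variable {p : ℝ}

lemma lpNormPow_nonneg (p : ℝ) (z : ℕ →₀ ℝ) : 0 ≤ lpNormPow p z :=
  sum_nonneg fun _ _ => Real.rpow_nonneg (abs_nonneg _) _

lemma lpNorm_eq_lpNormPow_rpow (p : ℝ) (z : ℕ →₀ ℝ) :
    lpNorm p z = lpNormPow p z ^ (1 / p) := rfl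

lemma lpNormPow_le_one_of_lpNorm_le_one (hp : 0 < p) {z : ℕ →₀ ℝ} (hz : lpNorm p z ≤ 1) :
    lpNormPow p z ≤ 1 := by
  rwa [lpNorm_eq_lpNormPow_rpow, one_div, Real.rpow_inv_le_iff_of_pos (lpNormPow_nonneg p z)
    zero_le_one hp, Real.one_rpow] at hz

lemma rpow_abs_apply_le_lpNormPow (hp : 0 < p) (z : ℕ →₀ ℝ) (n : ℕ) :
    |z n| ^ p ≤ lpNormPow p z := by
  by_cases hn : n ∈ z.support
  · exact single_le_sum (f := fun i => |z i| ^ p)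
      (fun i _ => Real.rpow_nonneg (abs_nonneg _) _) hn
  · rw [Finsupp.notMem_support_iff.mp hn, abs_zero, Real.zero_rpow hp.ne']
    exact lpNormPow_nonneg p z

lemma abs_apply_le_lpNorm (hp : 0 < p) (z : ℕ →₀ ℝ) (n : ℕ) : |z n| ≤ lpNorm p z := by
  rw [lpNorm_eq_lpNormPow_rpow, one_div,
    Real.le_rpow_inv_iff_of_pos (abs_nonneg _) (lpNormPow_nonneg p z) hp]
  exact rpow_abs_apply_le_lpNormPow hp z n

lemma pairing_eq_sum (z y : ℕ →₀ ℝ) : pairing z y = z.sum fun i a => a * y i := rfl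

lemma pairing_eq_sum_of_support_subset {z : ℕ →₀ ℝ} {S : Finset ℕ} (hS : z.support ⊆ S)
    (y : ℕ →₀ ℝ) : pairing z y = ∑ i ∈ S, z i * y i :=
  Finsupp.sum_of_support_subset z hS (fun i a => a * y i) fun _ _ => zero_mul _

lemma pairing_single (z : ℕ →₀ ℝ) (n : ℕ) (e : ℝ) :
    pairing z (Finsupp.single n e) = z n * e := by
  rw [pairing_eq_sum, Finsupp.sum, sum_eq_single n]
  · simp
  · intro i _ hi
    simp [Ne.symm hi]
  · intro hn
    simp [Finsupp.notMem_support_iff.mp hn]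

lemma pairing_finset_sum {ι : Type*} (s : Finset ι) (z : ι → ℕ →₀ ℝ) (y : ℕ →₀ ℝ) :
    pairing (∑ k ∈ s, z k) y = ∑ k ∈ s, pairing (z k) y := by
  simp only [pairing_eq_sum]
  exact (Finsupp.sum_finsetSum_index (h := fun i a => a * y i) (fun _ => zero_mul _)
    fun _ _ _ => add_mul _ _ _).symm

lemma restrictTo_apply (z w : ℕ →₀ ℝ) (i : ℕ) :
    restrictTo z w i = if w i ≠ 0 then z i else 0 :=
  Finsupp.filter_apply _ _ _

lemma pairing_restrictTo (z w : ℕ →₀ ℝ) : pairing (restrictTo z w) w = pairing z w := by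
  rw [pairing_eq_sum_of_support_subset (filter_subset _ z.support)]
  refine sum_congr rfl fun i _ => ?_
  by_cases hi : w i = 0 <;> simp [restrictTo_apply, hi]

lemma pairing_smul_sum (θ : ℝ) (z : ℕ →₀ ℝ) {l : ℕ} (w : Fin l → ℕ →₀ ℝ) :
    pairing z (θ • ∑ k, w k) = θ * ∑ k, pairing (restrictTo z (w k)) (w k) := by
  simp only [pairing_restrictTo]
  simp only [pairing, Finsupp.smul_apply, Finsupp.finsetSum_apply, smul_eq_mul, mul_sum]
  rw [sum_comm]
  exact sum_congr rfl fun _ _ => sum_congr rfl fun _ _ => by ring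

lemma lpNormPow_restrictTo (p : ℝ) (z w : ℕ →₀ ℝ) :
    lpNormPow p (restrictTo z w) = ∑ i ∈ z.support.filter (fun i => w i ≠ 0), |z i| ^ p :=
  sum_congr rfl fun i hi => by rw [restrictTo_apply, if_pos (mem_filter.mp hi).2]

lemma sum_lpNormPow_restrictTo_le (p : ℝ) (z : ℕ →₀ ℝ) {l : ℕ} (w : Fin l → ℕ →₀ ℝ)
    (hw : ∀ i j, i ≠ j → Disjoint (w i).support (w j).support) :
    ∑ k, lpNormPow p (restrictTo z (w k)) ≤ lpNormPow p z := by
  simp only [lpNormPow_restrictTo]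
  rw [← sum_biUnion]
  · exact sum_le_sum_of_subset_of_nonneg (biUnion_subset.mpr fun _ _ => filter_subset _ _)
      fun _ _ _ => Real.rpow_nonneg (abs_nonneg _) _
  · intro k _ k' _ hkk'
    exact disjoint_left.mpr fun i hi hi' => disjoint_left.mp (hw k k' hkk')
      (Finsupp.mem_support_iff.mpr (mem_filter.mp hi).2)
      (Finsupp.mem_support_iff.mpr (mem_filter.mp hi').2)

lemma sum_le_card_rpow_mul_sum_rpow {q : ℝ} (hpq : p.HolderConjugate q) {l : ℕ}
    (u : Fin l → ℝ) (hu : ∀ k, 0 ≤ u k) :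
    ∑ k, u k ≤ (l : ℝ) ^ (1 / q) * (∑ k, u k ^ p) ^ (1 / p) := by
  have := Real.inner_le_Lp_mul_Lq_of_nonneg univ hpq (f := u) (g := 1) (fun k _ => hu k)
    fun _ _ => zero_le_one
  simpa [mul_comm] using this

section Admissible

def HasLevels (c s : ℝ) (z : ℕ →₀ ℝ) : Prop := ∀ i, z i ≠ 0 → ∃ j : ℕ, |z i| = c / s ^ j

/-- Over the norming set, the second bound gives the paper's estimate
`|J_m x|_{p,r} ≤ α^{m-M} + α^{(M-m)(p-1)} ‖J_m x‖_p^p / t`, with `c = α^{m-M}`, `s = α^M` and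
`t = s^{p-1}`. -/
structure IsAdmissible (p s : ℝ) (y : ℕ →₀ ℝ) : Prop where
  pairing_le_lpNorm : ∀ z, pairing z y ≤ lpNorm p z
  pairing_le_of_hasLevels :
    ∀ c > 0, ∀ z, HasLevels c s z → pairing z y ≤ c + lpNormPow p z / (s * c) ^ (p - 1)

variable {c s : ℝ}

lemma HasLevels.restrictTo {z : ℕ →₀ ℝ} (hz : HasLevels c s z) (w : ℕ →₀ ℝ) :
    HasLevels c s (restrictTo z w) := by
  intro i hi
  rw [restrictTo_apply] at hi ⊢
  split_ifs at hi ⊢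
  · exact hz i hi
  · exact absurd rfl hi

lemma HasLevels.abs_le {z : ℕ →₀ ℝ} (hz : HasLevels c s z) (hc : 0 ≤ c) (hs : 1 ≤ s)
    (i : ℕ) : |z i| ≤ c := by
  by_cases hi : z i = 0
  · rwa [hi, abs_zero]
  · obtain ⟨j, hj⟩ := hz i hi
    exact hj ▸ div_le_self hc (one_le_pow₀ hs)

lemma HasLevels.div_self {z : ℕ →₀ ℝ} (hz : HasLevels c s z) (hlt : ∀ i, |z i| < c) :
    HasLevels (c / s) s z := by
  intro i hi
  obtain ⟨j, hj⟩ := hz i hi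
  cases j with
  | zero => exact absurd hj (by simpa using (hlt i).ne)
  | succ j => exact ⟨j, by rw [hj, div_div, ← pow_succ']⟩

lemma rpow_one_div_le_div_rpow_sub_one {N : ℝ} (hp : 1 ≤ p) (hc : 0 < c) (hcN : c ^ p ≤ N) :
    N ^ (1 / p) ≤ N / c ^ (p - 1) := by
  have hN : 0 < N := (Real.rpow_pos_of_pos hc p).trans_le hcN
  have hp0 : 0 < p := by linarith
  rw [le_div_iff₀ (Real.rpow_pos_of_pos hc _)]
  calc N ^ (1 / p) * c ^ (p - 1) ≤ N ^ (1 / p) * (N ^ (1 / p)) ^ (p - 1) := by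
        gcongr
        rwa [one_div, Real.le_rpow_inv_iff_of_pos hc.le hN.le hp0]
    _ = N := by
        rw [← Real.rpow_mul hN.le, ← Real.rpow_add hN, one_div_mul_eq_div, ← add_div,
          add_sub_cancel, div_self hp0.ne', Real.rpow_one]

lemma IsAdmissible.pairing_le_div_add {y z : ℕ →₀ ℝ} (hy : IsAdmissible p s y) (hp : 1 ≤ p)
    (hs : 1 ≤ s) (hc : 0 < c) (hz : HasLevels c s z) :
    pairing z y ≤ c / s + lpNormPow p z / c ^ (p - 1) := by
  by_cases hbig : ∃ i, c ≤ |z i|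
  · obtain ⟨i, hi⟩ := hbig
    have hcN : c ^ p ≤ lpNormPow p z := (Real.rpow_le_rpow hc.le hi (by linarith)).trans
      (rpow_abs_apply_le_lpNormPow (by linarith) z i)
    calc pairing z y ≤ lpNorm p z := hy.pairing_le_lpNorm z
      _ ≤ lpNormPow p z / c ^ (p - 1) := rpow_one_div_le_div_rpow_sub_one hp hc hcN
      _ ≤ c / s + lpNormPow p z / c ^ (p - 1) := le_add_of_nonneg_left (by positivity)
  · simp only [not_exists, not_le] at hbig
    have := hy.pairing_le_of_hasLevels (c / s) (by positivity) z (hz.div_self hbig)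
    rwa [mul_div_cancel₀ c (by positivity)] at this

lemma isAdmissible_single (hp : 0 < p) (hs : 1 ≤ s) (n : ℕ) {e : ℝ} (he : |e| = 1) :
    IsAdmissible p s (Finsupp.single n e) := by
  have hle (z : ℕ →₀ ℝ) : pairing z (Finsupp.single n e) ≤ |z n| := by
    rw [pairing_single]
    exact (le_abs_self _).trans_eq (by rw [abs_mul, he, mul_one])
  refine ⟨fun z => (hle z).trans (abs_apply_le_lpNorm hp z n), fun c hc z hz => ?_⟩
  exact (hle z).trans ((hz.abs_le hc.le hs n).trans
    (le_add_of_nonneg_right (div_nonneg (lpNormPow_nonneg p z) (by positivity))))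

variable {q : ℝ} {r l : ℕ} {w : Fin l → ℕ →₀ ℝ}

lemma rpow_one_div_eq_rpow_sub_one (hpq : p.HolderConjugate q) (hs : 0 ≤ s)
    (hsr : s ^ p = r) : (r : ℝ) ^ (1 / q) = s ^ (p - 1) := by
  rw [← hsr, ← Real.rpow_mul hs, mul_one_div, hpq.div_conj_eq_sub_one]

lemma pairing_smul_sum_le_lpNorm (hpq : p.HolderConjugate q) (hr : 0 < r) (hlr : l ≤ r)
    (hw : ∀ k, IsAdmissible p s (w k))
    (hdisj : ∀ i j, i ≠ j → Disjoint (w i).support (w j).support) (z : ℕ →₀ ℝ) :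
    pairing z ((r : ℝ) ^ (-(1 / q)) • ∑ k, w k) ≤ lpNorm p z := by
  have hu (k : Fin l) :
      lpNorm p (restrictTo z (w k)) ^ p = lpNormPow p (restrictTo z (w k)) := by
    rw [lpNorm_eq_lpNormPow_rpow, one_div,
      Real.rpow_inv_rpow (lpNormPow_nonneg _ _) hpq.ne_zero]
  set θ : ℝ := (r : ℝ) ^ (-(1 / q)) with hθ
  set u : Fin l → ℝ := fun k => lpNorm p (restrictTo z (w k))
  rw [pairing_smul_sum]
  calc θ * ∑ k, pairing (restrictTo z (w k)) (w k)
      ≤ θ * ((l : ℝ) ^ (1 / q) * (∑ k, u k ^ p) ^ (1 / p)) := by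
        gcongr
        exact (sum_le_sum fun k _ => (hw k).pairing_le_lpNorm _).trans
          (sum_le_card_rpow_mul_sum_rpow hpq u fun k =>
            Real.rpow_nonneg (lpNormPow_nonneg _ _) _)
    _ ≤ θ * ((r : ℝ) ^ (1 / q) * lpNormPow p z ^ (1 / p)) := by
        simp only [u, hu]
        have hl : (l : ℝ) ^ (1 / q) ≤ (r : ℝ) ^ (1 / q) :=
          Real.rpow_le_rpow (Nat.cast_nonneg l) (by exact_mod_cast hlr) hpq.symm.one_div_nonneg
        have hS : 0 ≤ ∑ k, lpNormPow p (restrictTo z (w k)) :=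
          sum_nonneg fun k _ => lpNormPow_nonneg _ _
        have hN : (∑ k, lpNormPow p (restrictTo z (w k))) ^ (1 / p) ≤ lpNormPow p z ^ (1 / p) :=
          Real.rpow_le_rpow hS (sum_lpNormPow_restrictTo_le p z w hdisj) hpq.one_div_nonneg
        exact mul_le_mul_of_nonneg_left (mul_le_mul hl hN (Real.rpow_nonneg hS _)
          (by positivity)) (Real.rpow_nonneg (Nat.cast_nonneg r) _)
    _ = lpNorm p z := by
        rw [hθ, ← mul_assoc, ← Real.rpow_add (by exact_mod_cast hr), neg_add_cancel,
          Real.rpow_zero, one_mul, lpNorm_eq_lpNormPow_rpow]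

lemma pairing_smul_sum_le_of_hasLevels (hpq : p.HolderConjugate q) (hs : 1 ≤ s)
    (hsr : s ^ p = r) (hlr : l ≤ r) (hw : ∀ k, IsAdmissible p s (w k))
    (hdisj : ∀ i j, i ≠ j → Disjoint (w i).support (w j).support) (hc : 0 < c)
    {z : ℕ →₀ ℝ} (hz : HasLevels c s z) :
    pairing z ((r : ℝ) ^ (-(1 / q)) • ∑ k, w k) ≤ c + lpNormPow p z / (s * c) ^ (p - 1) := by
  have hs0 : 0 < s := by linarith
  set θ : ℝ := (r : ℝ) ^ (-(1 / q)) with hθ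
  set N : Fin l → ℝ := fun k => lpNormPow p (restrictTo z (w k))
  have hθs : θ = (s ^ (p - 1))⁻¹ := by
    rw [hθ, Real.rpow_neg (Nat.cast_nonneg r), rpow_one_div_eq_rpow_sub_one hpq hs0.le hsr]
  have hr : (r : ℝ) = s ^ (p - 1) * s := by
    rw [← hsr, Real.rpow_sub_one hs0.ne', div_mul_cancel₀ _ hs0.ne']
  rw [pairing_smul_sum]
  calc θ * ∑ k, pairing (restrictTo z (w k)) (w k)
      ≤ θ * ∑ k, (c / s + N k / c ^ (p - 1)) := by
        gcongr with k
        exact (hw k).pairing_le_div_add hpq.lt.le hs hc (hz.restrictTo _)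
    _ = θ * (l * (c / s) + (∑ k, N k) / c ^ (p - 1)) := by
        rw [sum_add_distrib, sum_const, card_univ, Fintype.card_fin, nsmul_eq_mul, sum_div]
    _ ≤ θ * (r * (c / s) + lpNormPow p z / c ^ (p - 1)) := by
        gcongr
        exact sum_lpNormPow_restrictTo_le p z w hdisj
    _ = c + lpNormPow p z / (s * c) ^ (p - 1) := by
        rw [hθs, hr, Real.mul_rpow hs0.le hc.le]
        field_simp

lemma tsirelsonModClosed_isAdmissible (hpq : p.HolderConjugate q) (hs : 1 ≤ s)
    (hsr : s ^ p = r) : TsirelsonModClosed q r {y | IsAdmissible p s y} := by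
  have hr : 0 < r := by
    exact_mod_cast zero_lt_one.trans_le ((Real.one_le_rpow hs hpq.nonneg).trans_eq hsr)
  refine ⟨fun n => ⟨isAdmissible_single hpq.pos hs n (by norm_num),
    isAdmissible_single hpq.pos hs n (by norm_num)⟩, fun l w _ hlr hw hdisj => ?_⟩
  exact ⟨pairing_smul_sum_le_lpNorm hpq hr hlr hw hdisj,
    fun c hc z hz => pairing_smul_sum_le_of_hasLevels hpq hs hsr hlr hw hdisj hc hz⟩

lemma isAdmissible_of_mem_KMqr (hpq : p.HolderConjugate q) (hs : 1 ≤ s) (hsr : s ^ p = r)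
    {y : ℕ →₀ ℝ} (hy : y ∈ KMqr q r) : IsAdmissible p s y :=
  Set.mem_sInter.mp hy _ (tsirelsonModClosed_isAdmissible hpq hs hsr)

end Admissible
section Decomposition

variable {α : ℝ}

lemma zpow_mul_pow_zpow (hα : α ≠ 0) (m M : ℕ) (j : ℤ) :
    α ^ (m : ℤ) * (α ^ M) ^ j = α ^ ((m : ℤ) + M * j) := by
  rw [← zpow_natCast α M, ← zpow_mul, zpow_add₀ hα]

lemma exists_eq_zpow_mul_pow_zpow_iff (hα0 : 0 < α) (hα1 : α ≠ 1) (k : ℤ) {m M : ℕ}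
    (hm : m < M) : (∃ j : ℤ, α ^ k = α ^ (m : ℤ) * (α ^ M) ^ j) ↔ (m : ℤ) = k % M := by
  simp only [zpow_mul_pow_zpow hα0.ne', zpow_right_inj₀ hα0 hα1]
  constructor
  · rintro ⟨j, rfl⟩
    rw [Int.add_mul_emod_self_left, Int.emod_eq_of_lt (by omega) (by omega)]
  · intro h
    exact ⟨k / M, by rw [h, Int.emod_add_mul_ediv]⟩

lemma Jpart_apply (s : ℝ) (m : ℕ) (x : ℕ →₀ ℝ) (i : ℕ) :
    Jpart α s m x i = if ∃ j : ℤ, |x i| = α ^ (m : ℤ) * s ^ j then x i else 0 :=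
  Finsupp.filter_apply _ _ _

lemma sum_Jpart_eq_self (hα0 : 0 < α) (hα1 : α ≠ 1) {M : ℕ} (hM : 0 < M) {x : ℕ →₀ ℝ}
    (hx : x ∈ Nset α) : ∑ m ∈ range M, Jpart α (α ^ M) m x = x := by
  ext i
  rw [Finsupp.finsetSum_apply]
  by_cases hi : x i = 0
  · simp [Jpart_apply, hi]
  obtain ⟨k, hk⟩ := hx i hi
  have hkM : 0 ≤ k % M := Int.emod_nonneg _ (by omega)
  have hkM' : k % M < M := Int.emod_lt_of_pos _ (by omega)
  have hcond (m : ℕ) (hm : m ∈ range M) :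
      (∃ j : ℤ, |x i| = α ^ (m : ℤ) * (α ^ M) ^ j) ↔ m = (k % M).toNat := by
    rw [hk, exists_eq_zpow_mul_pow_zpow_iff hα0 hα1 k (mem_range.mp hm)]
    omega
  rw [sum_eq_single_of_mem (k % M).toNat (mem_range.mpr (by omega))]
  · rw [Jpart_apply, if_pos ((hcond _ (mem_range.mpr (by omega))).mpr rfl)]
  · intro m hm hne
    rw [Jpart_apply, if_neg (mt (hcond m hm).mp hne)]

lemma hasLevels_Jpart (hα : 1 < α) {m M : ℕ} (hm : 0 < m) {x : ℕ →₀ ℝ}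
    (hx : ∀ i, |Jpart α (α ^ M) m x i| ≤ 1) :
    HasLevels (α ^ ((m : ℤ) - M)) (α ^ M) (Jpart α (α ^ M) m x) := by
  have hα0 : α ≠ 0 := by positivity
  intro i hi
  have hxi := hx i
  rw [Jpart_apply] at hi hxi ⊢
  split_ifs at hi hxi ⊢ with hcond
  · obtain ⟨j, hj⟩ := hcond
    rw [zpow_mul_pow_zpow hα0] at hj
    have hexp : (m : ℤ) + M * j ≤ 0 := (zpow_le_one_iff_right₀ hα).mp (hj ▸ hxi)
    have hj1 : j + 1 ≤ 0 := by nlinarith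
    refine ⟨(-(j + 1)).toNat, ?_⟩
    rw [hj, ← zpow_natCast (α ^ M), ← zpow_natCast α M, ← zpow_mul, ← zpow_sub₀ hα0]
    congr 1
    rw [Int.toNat_of_nonneg (by omega)]
    ring
  · exact absurd rfl hi

lemma pairing_Jpart_le {p : ℝ} (hp : 1 ≤ p) (hα : 1 < α) {m M : ℕ} (hmM : m < M)
    {x y : ℕ →₀ ℝ} (hy : IsAdmissible p (α ^ M) y)
    (hJ : lpNorm p (Jpart α (α ^ M) m x) ≤ 1) :
    pairing (Jpart α (α ^ M) m x) y ≤ α ^ ((m : ℤ) - M) + α ^ (-(m : ℝ) * (p - 1)) := by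
  have hα0 : 0 < α := by linarith
  rcases Nat.eq_zero_or_pos m with rfl | hm
  · have := (hy.pairing_le_lpNorm _).trans hJ
    simp only [CharP.cast_eq_zero, neg_zero, zero_mul, Real.rpow_zero]
    linarith [show 0 < α ^ ((0 : ℤ) - M) by positivity]
  have hlev := hasLevels_Jpart hα hm fun i =>
    (abs_apply_le_lpNorm (by linarith) _ i).trans hJ
  have hsc : α ^ M * α ^ ((m : ℤ) - M) = α ^ m := by
    rw [← zpow_natCast, ← zpow_add₀ hα0.ne', add_sub_cancel, zpow_natCast]
  have hN := lpNormPow_le_one_of_lpNorm_le_one (by linarith) hJ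
  calc pairing (Jpart α (α ^ M) m x) y
      ≤ α ^ ((m : ℤ) - M) + lpNormPow p (Jpart α (α ^ M) m x) / (α ^ m) ^ (p - 1) := by
        rw [← hsc]
        exact hy.pairing_le_of_hasLevels _ (by positivity) _ hlev
    _ ≤ α ^ ((m : ℤ) - M) + 1 / (α ^ m) ^ (p - 1) := by gcongr
    _ = α ^ ((m : ℤ) - M) + α ^ (-(m : ℝ) * (p - 1)) := by
        rw [one_div, ← Real.rpow_natCast, ← Real.rpow_mul hα0.le, ← Real.rpow_neg hα0.le,
          neg_mul]

end Decomposition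

section GeometricSums

variable {α β : ℝ}

lemma sum_range_zpow_sub_eq (M : ℕ) :
    ∑ m ∈ range M, α ^ ((m : ℤ) - M) = ∑ m ∈ Icc 1 M, α ^ (-(m : ℝ)) := by
  rw [← Ico_add_one_right_eq_Icc, sum_Ico_eq_sum_range, Nat.add_sub_cancel,
    ← sum_range_reflect]
  refine sum_congr rfl fun m hm => ?_
  have hmM := mem_range.mp hm
  rw [← Real.rpow_intCast]
  congr 1
  push_cast [Nat.cast_sub (by omega : m ≤ M - 1), Nat.cast_sub (by omega : 1 ≤ M)]
  ring

lemma rpow_neg_natCast_eq_inv_pow (hβ : 0 ≤ β) (m : ℕ) : β ^ (-(m : ℝ)) = β⁻¹ ^ m := by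
  rw [Real.rpow_neg hβ, Real.rpow_natCast, inv_pow]

lemma sum_Icc_rpow_neg_le (hβ : 1 < β) (M : ℕ) :
    ∑ m ∈ Icc 1 M, β ^ (-(m : ℝ)) ≤ 1 / (β - 1) := by
  have hβ0 : 0 < β := by linarith
  simp only [rpow_neg_natCast_eq_inv_pow hβ0.le]
  rw [← Ico_add_one_right_eq_Icc]
  refine (geom_sum_Ico_le_of_lt_one (by positivity) (inv_lt_one_of_one_lt₀ hβ)).trans_eq ?_
  field_simp

lemma sum_range_rpow_neg_le (hβ : 1 < β) (M : ℕ) :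
    ∑ m ∈ range M, β ^ (-(m : ℝ)) ≤ 1 + 1 / (β - 1) := by
  have hβ0 : 0 < β := by linarith
  simp only [rpow_neg_natCast_eq_inv_pow hβ0.le]
  rw [range_eq_Ico]
  refine (geom_sum_Ico_le_of_lt_one (by positivity) (inv_lt_one_of_one_lt₀ hβ)).trans_eq ?_
  have : β - 1 ≠ 0 := by linarith
  field_simp
  ring

lemma one_div_sub_one_le_of_two_rpow_le {a : ℝ} (ha : 0 < a) (hβ : 2 ^ (1 / a) ≤ β) :
    1 / (β - 1) ≤ 2 * a := by
  have hlog : 1 / 2 < Real.log 2 := by linarith [Real.log_two_gt_d9]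
  have h2 : 1 + Real.log 2 * (1 / a) ≤ 2 ^ (1 / a) := by
    rw [Real.rpow_def_of_pos two_pos]
    linarith [Real.add_one_le_exp (Real.log 2 * (1 / a))]
  have hβ1 : 1 / (2 * a) ≤ β - 1 := by
    have : 1 / (2 * a) ≤ Real.log 2 * (1 / a) := by
      rw [mul_one_div, div_le_div_iff₀ (by positivity) ha]
      nlinarith
    linarith
  calc 1 / (β - 1) ≤ 1 / (1 / (2 * a)) := one_div_le_one_div_of_le (by positivity) hβ1
    _ = 2 * a := one_div_one_div _

lemma two_rpow_one_div_le {p : ℝ} {r M : ℕ} (hp : 0 < p) (hα : 0 ≤ α) (hM : M ≠ 0)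
    (h2M : 2 ^ M ≤ r) (hαM : α ^ M = (r : ℝ) ^ (1 / p)) : (2 : ℝ) ^ (1 / p) ≤ α := by
  refine le_of_pow_le_pow_left₀ hM hα ?_
  rw [hαM, ← Real.rpow_natCast, ← Real.rpow_mul zero_le_two, mul_comm,
    Real.rpow_mul zero_le_two, Real.rpow_natCast]
  gcongr
  exact_mod_cast h2M

lemma sum_rpow_neg_add_sum_rpow_neg_le {p q : ℝ} (hpq : p.HolderConjugate q)
    (hα : (2 : ℝ) ^ (1 / p) ≤ α) (M : ℕ) :
    (∑ m ∈ Icc 1 M, α ^ (-(m : ℝ))) + ∑ m ∈ range M, α ^ (-(m : ℝ) * (p - 1)) ≤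
      6 * (p + q) := by
  have hα1 : 1 < α := (Real.one_lt_rpow one_lt_two hpq.one_div_pos).trans_le hα
  have hα0 : 0 ≤ α := by linarith
  have hδ : (2 : ℝ) ^ (1 / q) ≤ α ^ (p - 1) := by
    have hexp : 1 / q = 1 / p * (p - 1) := by
      rw [one_div q, ← hpq.one_sub_inv, one_div_mul_eq_div, sub_div, div_self hpq.ne_zero,
        one_div]
    rw [hexp, Real.rpow_mul zero_le_two]
    gcongr
    linarith [hpq.sub_one_pos]
  have hδ1 : 1 < α ^ (p - 1) := Real.one_lt_rpow hα1 hpq.sub_one_pos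
  have hsum2 : ∑ m ∈ range M, α ^ (-(m : ℝ) * (p - 1)) ≤ 1 + 1 / (α ^ (p - 1) - 1) := by
    simp only [mul_comm _ (p - 1), Real.rpow_mul hα0]
    exact sum_range_rpow_neg_le hδ1 M
  have := sum_Icc_rpow_neg_le hα1 M
  have := one_div_sub_one_le_of_two_rpow_le hpq.pos hα
  have := one_div_sub_one_le_of_two_rpow_le hpq.symm.pos hδ
  linarith [hpq.lt, hpq.symm.lt]

end GeometricSums

lemma modifiedNorm_le_of_lpNorm_Jpart_le_one {p q α : ℝ} {r M : ℕ}
    (hpq : p.HolderConjugate q) (hα : 1 < α) (hM : 0 < M) (hr : (α ^ M) ^ p = r)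
    {x : ℕ →₀ ℝ} (hx : x ∈ Nset α)
    (hJ : ∀ m < M, lpNorm p (Jpart α (α ^ M) m x) ≤ 1) :
    modifiedNorm q r x ≤
      (∑ m ∈ Icc 1 M, α ^ (-(m : ℝ))) + ∑ m ∈ range M, α ^ (-(m : ℝ) * (p - 1)) := by
  refine Real.sSup_le ?_ (by positivity)
  rintro _ ⟨y, hy, rfl⟩
  have hy := isAdmissible_of_mem_KMqr hpq (one_le_pow₀ hα.le) hr hy
  calc pairing x y = ∑ m ∈ range M, pairing (Jpart α (α ^ M) m x) y := by
        rw [← pairing_finset_sum, sum_Jpart_eq_self (by linarith) hα.ne' hM hx]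
    _ ≤ ∑ m ∈ range M, (α ^ ((m : ℤ) - M) + α ^ (-(m : ℝ) * (p - 1))) :=
        sum_le_sum fun m hm => pairing_Jpart_le hpq.lt.le hα (mem_range.mp hm) hy
          (hJ m (mem_range.mp hm))
    _ = _ := by rw [sum_add_distrib, sum_range_zpow_sub_eq]

end TsirelsonNorm

open TsirelsonNorm in
theorem right_estimate_general (p q : ℝ) (hp : 1 < p)
    (hpq : 1 / p + 1 / q = 1) (r : ℕ) (hr : 2 ≤ r)
    (M : ℕ) (hM : M = Nat.log 2 r)
    (α : ℝ) (hα : 0 < α) (hαM : α ^ M = (r : ℝ) ^ (1 / p : ℝ))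
    (s : ℝ) (hs : s = (r : ℝ) ^ (1 / p : ℝ))
    (x : ℕ →₀ ℝ) (hx : x ∈ Nset α)
    (hJhi : ∀ m < M, lpNorm p (Jpart α s m x) ≤ 1) :
    modifiedNorm q r x ≤
        (∑ m ∈ Finset.Icc 1 M, α ^ (-(m : ℝ))) +
          ∑ m ∈ Finset.range M, α ^ (-(m : ℝ) * (p - 1)) ∧
      (∑ m ∈ Finset.Icc 1 M, α ^ (-(m : ℝ))) +
          (∑ m ∈ Finset.range M, α ^ (-(m : ℝ) * (p - 1))) ≤ 6 * (p + q) := by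
  have hconj : p.HolderConjugate q :=
    Real.holderConjugate_iff.mpr ⟨hp, by simpa only [one_div] using hpq⟩
  have hM0 : 0 < M := hM ▸ Nat.log_pos one_lt_two hr
  have h2α : (2 : ℝ) ^ (1 / p) ≤ α :=
    two_rpow_one_div_le hconj.pos hα.le hM0.ne' (hM ▸ Nat.pow_log_le_self 2 (by omega)) hαM
  have hα1 : 1 < α := (Real.one_lt_rpow one_lt_two hconj.one_div_pos).trans_le h2α
  have hαr : (α ^ M) ^ p = r := by
    rw [hαM, ← Real.rpow_mul (Nat.cast_nonneg r), one_div_mul_cancel hconj.ne_zero,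
      Real.rpow_one]
  rw [hs, ← hαM] at hJhi
  exact ⟨modifiedNorm_le_of_lpNorm_Jpart_le_one hconj hα1 hM0 hαr hx hJhi,
    sum_rpow_neg_add_sum_rpow_neg_le hconj h2α M⟩

theorem right_estimate (p q : ℝ) (hp : 1 < p) (hq : 1 < q)
    (hpq : 1 / p + 1 / q = 1) (r : ℕ) (hr : 2 ≤ r)
    (M : ℕ) (hM : M = Nat.log 2 r)
    (α : ℝ) (hα : 0 < α) (hαM : α ^ M = (r : ℝ) ^ (1 / p : ℝ))
    (s : ℝ) (hs : s = (r : ℝ) ^ (1 / p : ℝ))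
    (x : ℕ →₀ ℝ) (hx : x ∈ Nset α)
    (hJlo : ∀ m < M, α ^ (-4 : ℤ) ≤ lpNorm p (Jpart α s m x))
    (hJhi : ∀ m < M, lpNorm p (Jpart α s m x) ≤ 1) :
    modifiedNorm q r x ≤
        (∑ m ∈ Finset.Icc 1 M, α ^ (-(m : ℝ))) +
          ∑ m ∈ Finset.range M, α ^ (-(m : ℝ) * (p - 1)) ∧
      (∑ m ∈ Finset.Icc 1 M, α ^ (-(m : ℝ))) +
          (∑ m ∈ Finset.range M, α ^ (-(m : ℝ) * (p - 1))) ≤ 6 * (p + q) :=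
  right_estimate_general p q hp hpq r hr M hM α hα hαM s hs x hx hJhi
end
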